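/- arXiv:math/0508286 — 9 statements merged into one kernel-verified Lean document; each statement's English description precedes it below -/
import Mathlib

section
/- Let n ≥ 1 be an integer, d a real number, and X : ℤ → ℂ a sequence with X_t = 0 for all t ≤ 0. Define u_t = Σ_{k=0}^{t} ((-d)_k / k!) X_{t-k} for t ≥ 1, where (a)_k = a(a+1)···(a+k-1) denotes the Pochhammer symbol. Then for every real λ, w_u(λ) = D_n(e^{iλ}; d) · w_X(λ) − (2πn)^{-1/2} e^{inλ} X̃_{λn}(d), where w_a(λ) = (2πn)^{-1/2} Σ_{t=1}^{n} a_t e^{itλ}, D_n(e^{iλ}; d) = Σ_{k=0}^{n} ((-d)_k / k!) e^{ikλ}, and X̃_{λn}(d) = Σ_{p=0}^{n-1} d̃_{λp} e^{-ipλ} X_{n-p} with d̃_{λp} = Σ_{k=p+1}^{n} ((-d)_k / k!) e^{ikλ}. -/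
/-- Pochhammer symbol `(a)_k = a (a+1) ⋯ (a+k-1)`. -/
noncomputable def poch (a : ℝ) (k : ℕ) : ℝ := ∏ i ∈ Finset.range k, (a + i)

/-- Discrete Fourier transform `w_a(λ) = (2πn)^{-1/2} ∑_{t=1}^n a_t e^{itλ}`. -/
noncomputable def dft (n : ℕ) (a : ℤ → ℂ) (l : ℝ) : ℂ :=
  (((2 * Real.pi * n) ^ (-(1/2) : ℝ) : ℝ) : ℂ) *
    ∑ t ∈ Finset.range n, a (t + 1) * Complex.exp (Complex.I * ((t : ℂ) + 1) * (l : ℂ))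

/-- `D_n(z; d) = ∑_{k=0}^n ((-d)_k / k!) z^k`. -/
noncomputable def Dn (n : ℕ) (d : ℝ) (z : ℂ) : ℂ :=
  ∑ k ∈ Finset.range (n + 1), ((poch (-d) k / (Nat.factorial k) : ℝ) : ℂ) * z ^ k

lemma key_sum (n : ℕ) (c : ℕ → ℂ) (X : ℤ → ℂ)
    (hX0 : ∀ t : ℤ, t ≤ 0 → X t = 0) (z : ℂ) (hz : z ≠ 0) :
    ∑ t ∈ Finset.range n, (∑ k ∈ Finset.range (t + 2), c k * X ((t : ℤ) + 1 - (k : ℤ))) * z ^ (t + 1)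
      = (∑ k ∈ Finset.range (n + 1), c k * z ^ k) *
          (∑ t ∈ Finset.range n, X ((t : ℤ) + 1) * z ^ (t + 1)) -
        z ^ n * ∑ p ∈ Finset.range n,
          (∑ k ∈ Finset.Icc (p + 1) n, c k * z ^ k) * (z ^ p)⁻¹ * X ((n : ℤ) - (p : ℤ)) := by
  have hstar : ∀ k ≤ n,
      ∑ t ∈ Finset.range n, X ((t : ℤ) + 1 - (k : ℤ)) * z ^ (t + 1)
        = ∑ s ∈ Finset.range (n - k), X ((s : ℤ) + 1) * z ^ (s + 1 + k) := by
    intro k hk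
    rw [Finset.range_eq_Ico, ← Finset.sum_Ico_consecutive _ (Nat.zero_le k) hk]
    have h1 : ∑ t ∈ Finset.Ico 0 k, X ((t : ℤ) + 1 - (k : ℤ)) * z ^ (t + 1) = 0 := by
      refine Finset.sum_eq_zero fun t ht => ?_
      have ht' : t < k := (Finset.mem_Ico.mp ht).2
      rw [hX0 ((t : ℤ) + 1 - (k : ℤ)) (by omega), zero_mul]
    rw [h1, zero_add, Finset.sum_Ico_eq_sum_range]
    refine Finset.sum_congr (by rw [Finset.range_eq_Ico]) fun i hi => ?_
    rw [show ((k + i : ℕ) : ℤ) + 1 - (k : ℤ) = (i : ℤ) + 1 by push_cast; ring,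
      show k + i + 1 = i + 1 + k by omega]
  have hsplit : ∀ k ≤ n,
      ∑ t ∈ Finset.range n, X ((t : ℤ) + 1) * z ^ (t + 1 + k)
        = (∑ s ∈ Finset.range (n - k), X ((s : ℤ) + 1) * z ^ (s + 1 + k))
          + ∑ p ∈ Finset.range k, X ((n : ℤ) - (p : ℤ)) * z ^ (n - p + k) := by
    intro k hk
    rw [Finset.range_eq_Ico, ← Finset.sum_Ico_consecutive _ (Nat.zero_le (n - k)) (Nat.sub_le n k),
      ← Finset.range_eq_Ico]
    congr 1
    rw [Finset.sum_Ico_eq_sum_range, show n - (n - k) = k by omega,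
      ← Finset.sum_range_reflect]
    refine Finset.sum_congr rfl fun p hp => ?_
    have hp' : p < k := Finset.mem_range.mp hp
    rw [show ((n - k + (k - 1 - p) : ℕ) : ℤ) + 1 = (n : ℤ) - (p : ℤ) by omega,
      show n - k + (k - 1 - p) + 1 + k = n - p + k by omega]
  have hL : ∑ t ∈ Finset.range n,
        (∑ k ∈ Finset.range (t + 2), c k * X ((t : ℤ) + 1 - (k : ℤ))) * z ^ (t + 1)
      = ∑ k ∈ Finset.range (n + 1), c k * ∑ s ∈ Finset.range (n - k),
          X ((s : ℤ) + 1) * z ^ (s + 1 + k) := by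
    calc ∑ t ∈ Finset.range n,
          (∑ k ∈ Finset.range (t + 2), c k * X ((t : ℤ) + 1 - (k : ℤ))) * z ^ (t + 1)
        = ∑ t ∈ Finset.range n, ∑ k ∈ Finset.range (n + 1),
            c k * X ((t : ℤ) + 1 - (k : ℤ)) * z ^ (t + 1) := by
          refine Finset.sum_congr rfl fun t ht => ?_
          rw [Finset.sum_mul]
          refine Finset.sum_subset (fun k hk => ?_) fun k hk hk2 => ?_
          · simp only [Finset.mem_range] at hk ht ⊢; omega
          have h1 : t + 2 ≤ k := by
            simp only [Finset.mem_range, not_lt] at hk2; omega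
          rw [hX0 ((t : ℤ) + 1 - (k : ℤ)) (by omega), mul_zero, zero_mul]
      _ = ∑ k ∈ Finset.range (n + 1), ∑ t ∈ Finset.range n,
            c k * X ((t : ℤ) + 1 - (k : ℤ)) * z ^ (t + 1) := Finset.sum_comm
      _ = ∑ k ∈ Finset.range (n + 1), c k * ∑ t ∈ Finset.range n,
            X ((t : ℤ) + 1 - (k : ℤ)) * z ^ (t + 1) := by
          refine Finset.sum_congr rfl fun k hk => ?_
          rw [Finset.mul_sum]
          exact Finset.sum_congr rfl fun t ht => by ring
      _ = _ := by
          refine Finset.sum_congr rfl fun k hk => ?_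
          rw [hstar k (by simpa using Nat.lt_succ_iff.mp (Finset.mem_range.mp hk))]
  have hR1 : (∑ k ∈ Finset.range (n + 1), c k * z ^ k) *
        (∑ t ∈ Finset.range n, X ((t : ℤ) + 1) * z ^ (t + 1))
      = ∑ k ∈ Finset.range (n + 1), c k * ∑ t ∈ Finset.range n,
          X ((t : ℤ) + 1) * z ^ (t + 1 + k) := by
    rw [Finset.sum_mul]
    refine Finset.sum_congr rfl fun k hk => ?_
    rw [Finset.mul_sum, Finset.mul_sum]
    refine Finset.sum_congr rfl fun t ht => ?_
    rw [pow_add]; ring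
  have hR2 : z ^ n * ∑ p ∈ Finset.range n,
        (∑ k ∈ Finset.Icc (p + 1) n, c k * z ^ k) * (z ^ p)⁻¹ * X ((n : ℤ) - (p : ℤ))
      = ∑ k ∈ Finset.range (n + 1), c k * ∑ p ∈ Finset.range k,
          X ((n : ℤ) - (p : ℤ)) * z ^ (n - p + k) := by
    calc z ^ n * ∑ p ∈ Finset.range n,
          (∑ k ∈ Finset.Icc (p + 1) n, c k * z ^ k) * (z ^ p)⁻¹ * X ((n : ℤ) - (p : ℤ))
        = ∑ p ∈ Finset.range n, ∑ k ∈ Finset.Icc (p + 1) n,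
            c k * (X ((n : ℤ) - (p : ℤ)) * z ^ (n - p + k)) := by
          rw [Finset.mul_sum]
          refine Finset.sum_congr rfl fun p hp => ?_
          have hp' : p ≤ n := le_of_lt (Finset.mem_range.mp hp)
          rw [Finset.sum_mul, Finset.sum_mul, Finset.mul_sum]
          refine Finset.sum_congr rfl fun k hk => ?_
          rw [pow_add, pow_sub₀ z hz hp']
          field_simp
      _ = ∑ k ∈ Finset.range (n + 1), ∑ p ∈ Finset.range k,
            c k * (X ((n : ℤ) - (p : ℤ)) * z ^ (n - p + k)) := by
          refine Finset.sum_comm' ?_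
          intro p k
          simp only [Finset.mem_range, Finset.mem_Icc]
          omega
      _ = _ := by
          refine Finset.sum_congr rfl fun k hk => ?_
          rw [Finset.mul_sum]
  rw [hL, hR1, hR2, ← Finset.sum_sub_distrib]
  refine Finset.sum_congr rfl fun k hk => ?_
  rw [hsplit k (Nat.lt_succ_iff.mp (Finset.mem_range.mp hk))]
  ring

/-- Lemma 5.1(a): exact d.f.t. identity for the fractionally differenced series. -/
theorem exact_dft_identity (n : ℕ) (hn : 1 ≤ n) (d : ℝ) (X u : ℤ → ℂ)
    (hX0 : ∀ t : ℤ, t ≤ 0 → X t = 0)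
    (hu : ∀ t : ℤ, 1 ≤ t →
      u t = ∑ k ∈ Finset.range (t.toNat + 1),
        ((poch (-d) k / (Nat.factorial k) : ℝ) : ℂ) * X (t - (k : ℤ)))
    (l : ℝ) :
    dft n u l =
      Dn n d (Complex.exp (Complex.I * (l : ℂ))) * dft n X l -
        (((2 * Real.pi * n) ^ (-(1/2) : ℝ) : ℝ) : ℂ) *
          Complex.exp (Complex.I * (n : ℂ) * (l : ℂ)) *
          ∑ p ∈ Finset.range n,
            (∑ k ∈ Finset.Icc (p + 1) n,
                ((poch (-d) k / (Nat.factorial k) : ℝ) : ℂ) *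
                  Complex.exp (Complex.I * (k : ℂ) * (l : ℂ))) *
              Complex.exp (-Complex.I * (p : ℂ) * (l : ℂ)) * X ((n : ℤ) - (p : ℤ)) := by
  set z : ℂ := Complex.exp (Complex.I * (l : ℂ)) with hzdef
  have hz : z ≠ 0 := Complex.exp_ne_zero _
  have hpow : ∀ m : ℕ, Complex.exp (Complex.I * (m : ℂ) * (l : ℂ)) = z ^ m := fun m => by
    rw [hzdef, ← Complex.exp_nat_mul]; congr 1; ring
  have hpow1 : ∀ t : ℕ, Complex.exp (Complex.I * ((t : ℂ) + 1) * (l : ℂ)) = z ^ (t + 1) := fun t => by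
    rw [← hpow (t + 1)]; congr 1; push_cast; ring
  have hneg : ∀ m : ℕ, Complex.exp (-Complex.I * (m : ℂ) * (l : ℂ)) = (z ^ m)⁻¹ := fun m => by
    rw [← hpow m, ← Complex.exp_neg]; congr 1; ring
  have hu2 : ∀ t : ℕ, u ((t : ℤ) + 1)
      = ∑ k ∈ Finset.range (t + 2),
          ((poch (-d) k / (Nat.factorial k) : ℝ) : ℂ) * X ((t : ℤ) + 1 - (k : ℤ)) := fun t => by
    rw [hu ((t : ℤ) + 1) (by omega), show ((t : ℤ) + 1).toNat = t + 1 by omega]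
  unfold dft Dn
  simp only [hu2, hpow1, hpow, hneg]
  rw [key_sum n (fun k => ((poch (-d) k / (Nat.factorial k) : ℝ) : ℂ)) X hX0 z hz]
  ring
end

section
/- For every C > 1 there exist constants K > 0 and δ ∈ (0, π) such that for all θ ∈ [−C, C] and all λ ∈ (0, δ]: |λ^{−θ}(1 − e^{iλ})^{θ} − e^{−iπθ/2}| ≤ Kλ, where (1 − e^{iλ})^{θ} denotes the principal-branch complex power exp(θ · Log(1 − e^{iλ})) and λ^{−θ} is the real power. -/
/-!
Writing `1 - e^{ix} = 2 sin(x/2) · e^{i(x - π)/2}` with `2 sin(x/2) > 0` and `(x - π)/2 ∈ (-π, π]`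
identifies the principal logarithm, so that
`x^{-θ} (1 - e^{ix})^θ = e^{-iπθ/2} · exp(θ (log(sin(x/2)/(x/2)) + ix/2))`.
Since `|log(sin y / y)| ≤ y²`, the second exponent is `O(|θ| x)`, and `|e^w - 1| ≤ 2|w|` for `|w| ≤ 1`.
-/

open Complex

theorem Complex.one_sub_exp_I_mul (x : ℝ) :
    1 - exp (I * x) = (2 * Real.sin (x / 2) : ℝ) * exp (((x - Real.pi) / 2 : ℝ) * I) := by
  set v : ℂ := (x / 2 : ℝ) * I
  have h_square : exp (I * x) = exp v * exp v := by
    rw [← exp_add]; push_cast [v]; ring_nf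
  have h_inv : exp (-v) * exp v = 1 := by rw [← exp_add, neg_add_cancel, exp_zero]
  have h_quarter_turn : exp (((x - Real.pi) / 2 : ℝ) * I) = -I * exp v := by
    rw [show (((x - Real.pi) / 2 : ℝ) : ℂ) * I = v - Real.pi / 2 * I by push_cast [v]; ring,
      exp_sub, exp_pi_div_two_mul_I, div_I]
    ring
  rw [h_square, h_quarter_turn, ofReal_mul, ofReal_ofNat, ofReal_sin, sin, neg_mul]
  linear_combination -h_inv + (exp (-v) - exp v) * exp v * I_mul_I

theorem Complex.log_one_sub_exp_I_mul {x : ℝ} (h0 : 0 < x) (h2π : x < 2 * Real.pi) :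
    log (1 - exp (I * x)) = Real.log (2 * Real.sin (x / 2)) + ((x - Real.pi) / 2 : ℝ) * I := by
  have hsin : 0 < 2 * Real.sin (x / 2) :=
    mul_pos two_pos (Real.sin_pos_of_pos_of_lt_pi (by linarith) (by linarith))
  rw [one_sub_exp_I_mul, log_ofReal_mul hsin (exp_ne_zero _), log_exp] <;>
    simp only [mul_I_im, ofReal_re] <;> linarith

theorem Real.abs_log_sin_div_self_le {y : ℝ} (h0 : 0 < y) (h1 : y ≤ 1) :
    |Real.log (Real.sin y / y)| ≤ y ^ 2 := by
  have hsin_lt := Real.sin_lt h0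
  have hsin_gt := Real.sin_gt_sub_cube h0
  have hsin_pos : 0 < Real.sin y :=
    Real.sin_pos_of_pos_of_lt_pi h0 (by linarith [Real.pi_gt_three])
  have hlog_nonpos : Real.log (Real.sin y / y) ≤ 0 :=
    Real.log_nonpos (by positivity) ((div_le_one h0).2 hsin_lt.le)
  have hlog_ge := Real.one_sub_inv_le_log_of_pos (div_pos hsin_pos h0)
  rw [inv_div] at hlog_ge
  have h_inv_sub_one : y / Real.sin y - 1 ≤ y ^ 2 := by
    rw [div_sub_one hsin_pos.ne', div_le_iff₀ hsin_pos]
    nlinarith [mul_lt_mul_of_pos_left hsin_gt (pow_pos h0 2), pow_pos h0 3,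
      pow_le_pow_of_le_one h0.le h1 (show 3 ≤ 5 by norm_num)]
  rw [abs_of_nonpos hlog_nonpos]
  linarith

theorem Complex.rpow_neg_mul_cpow_one_sub_exp_I_mul (θ : ℝ) {x : ℝ} (h0 : 0 < x)
    (h2π : x < 2 * Real.pi) :
    ((x ^ (-θ) : ℝ) : ℂ) * (1 - exp (I * x)) ^ (θ : ℂ) =
      exp (-I * Real.pi * θ / 2) *
        exp (θ * (Real.log (Real.sin (x / 2) / (x / 2)) + (x / 2 : ℝ) * I)) := by
  have hsin : 0 < Real.sin (x / 2) := Real.sin_pos_of_pos_of_lt_pi (by linarith) (by linarith)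
  rw [Real.rpow_def_of_pos h0, cpow_def_of_ne_zero, log_one_sub_exp_I_mul h0 h2π, ofReal_exp,
    ← exp_add, ← exp_add, Real.log_mul two_ne_zero hsin.ne', Real.log_div hsin.ne' (by positivity),
    Real.log_div h0.ne' two_ne_zero]
  · push_cast
    congr 1
    ring
  · rw [one_sub_exp_I_mul]
    exact mul_ne_zero (ofReal_ne_zero.2 (by positivity)) (exp_ne_zero _)

theorem Complex.norm_rpow_neg_mul_cpow_one_sub_exp_I_mul_sub_le {θ x : ℝ} (h0 : 0 < x)
    (h1 : x ≤ 1) (hθx : |θ| * x ≤ 1) :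
    ‖((x ^ (-θ) : ℝ) : ℂ) * (1 - exp (I * x)) ^ (θ : ℂ) - exp (-I * Real.pi * θ / 2)‖ ≤
      2 * |θ| * x := by
  set w : ℂ := θ * (Real.log (Real.sin (x / 2) / (x / 2)) + (x / 2 : ℝ) * I)
  have hw : ‖w‖ ≤ |θ| * x := by
    have hlog := Real.abs_log_sin_div_self_le (y := x / 2) (by positivity) (by linarith)
    calc ‖w‖ ≤ |θ| * (|Real.log (Real.sin (x / 2) / (x / 2))| + x / 2) := by
          rw [norm_mul, norm_real, Real.norm_eq_abs]
          gcongr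
          refine (norm_add_le _ _).trans ?_
          rw [norm_mul, norm_I, mul_one, norm_real, norm_real, Real.norm_eq_abs,
            Real.norm_eq_abs, abs_of_pos (half_pos h0)]
      _ ≤ |θ| * x := by gcongr; nlinarith
  have h_unit : ‖exp (-I * Real.pi * θ / 2)‖ = 1 := by
    rw [norm_exp]; simp
  rw [rpow_neg_mul_cpow_one_sub_exp_I_mul θ h0 (by linarith [Real.pi_gt_three]), ← mul_sub_one,
    norm_mul, h_unit, one_mul]
  calc ‖exp w - 1‖ ≤ 2 * ‖w‖ := norm_exp_sub_one_le (hw.trans hθx)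
    _ ≤ 2 * |θ| * x := by linarith

/-- Lemma 5.2(a), first assertion: uniformly in `θ ∈ [-C, C]`,
`λ^{-θ} (1 - e^{iλ})^θ = e^{-iπθ/2} + O(λ)` as `λ → 0+`,
where the complex power is the principal branch. -/
theorem power_transfer_function_expansion (C : ℝ) (hC : 1 < C) :
    ∃ K > 0, ∃ δ : ℝ, 0 < δ ∧ δ < Real.pi ∧
      ∀ θ ∈ Set.Icc (-C) C, ∀ l ∈ Set.Ioc (0 : ℝ) δ,
        ‖(((l ^ (-θ) : ℝ) : ℂ) *
            (1 - Complex.exp (Complex.I * (l : ℂ))) ^ (θ : ℂ) -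
          Complex.exp (-Complex.I * (Real.pi : ℂ) * (θ : ℂ) / 2))‖ ≤ K * l := by
  have hC0 : 0 < C := one_pos.trans hC
  have hδ1 : 1 / C < 1 := (div_lt_one hC0).2 hC
  refine ⟨2 * C, by positivity, 1 / C, by positivity, hδ1.trans (by linarith [Real.pi_gt_three]),
    fun θ hθ l ⟨hl0, hlδ⟩ ↦ ?_⟩
  have hθC : |θ| ≤ C := abs_le.2 hθ
  have hlC : C * l ≤ 1 := by rwa [le_div_iff₀' hC0] at hlδ
  calc _ ≤ 2 * |θ| * l :=
        norm_rpow_neg_mul_cpow_one_sub_exp_I_mul_sub_le hl0 (by linarith) (by nlinarith)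
    _ ≤ 2 * C * l := by gcongr
end

section
/- Define p_m = exp(m^{−1} Σ_{j=1}^{m} log j) (so p_m ~ m/e as m → ∞). For every Δ ∈ (0, 1/(2e)) and every C > 1 there exist ε ∈ (0, 0.1) and κ̄ ∈ (0, 1/4) such that for every fixed κ ∈ (0, κ̄] there is an integer m₀ with: for all m ≥ m₀, inf_{γ ∈ [−C, −1+2Δ]} m^{−1} Σ_{j=⌊κm⌋}^{m} (j/p_m)^{γ} ≥ 1 + 2ε. -/
/-- Geometric mean of `1, …, m`: `p_m = exp(m⁻¹ ∑_{j=1}^m log j)` (so `p_m ~ m/e`). -/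
noncomputable def pm (m : ℕ) : ℝ :=
  Real.exp ((m : ℝ)⁻¹ * ∑ j ∈ Finset.Icc 1 m, Real.log j)

/-!
Since `p_m ^ m = m!`, the bounds `(m/e)^m ≤ m! ≤ m^m` give `m/e ≤ p_m ≤ m`. For `j ≤ p_m` the
terms `(j/p_m)^γ` decrease in `γ`, so it suffices to bound `∑_{⌊κm⌋ ≤ j < ⌈p_m⌉} (j/p_m)^{2Δ-1}`,
which by comparison with `∫ (x/p_m)^{2Δ-1} dx` is at least
`(p_m - p_m^{1-2Δ} ⌊κm⌋^{2Δ}) / (2Δ) ≥ m (1/e - κ^{2Δ}) / (2Δ)`.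
As `2Δ < 1/e`, this exceeds `m (1 + 2ε)` once `ε` and `κ` are small.
-/

open Real Finset Set
open scoped Nat

theorem sum_Icc_log_eq_log_factorial (m : ℕ) : ∑ j ∈ Icc 1 m, log j = log (m ! : ℝ) := by
  rw [← Finset.Ico_add_one_right_eq_Icc, ← prod_Ico_id_eq_factorial, Nat.cast_prod, log_prod]
  intro j hj
  exact Nat.cast_ne_zero.mpr (by grind)

theorem pm_pos (m : ℕ) : 0 < pm m := exp_pos _

theorem pm_pow_self {m : ℕ} (hm : m ≠ 0) : pm m ^ m = m ! := by
  rw [pm, ← exp_nat_mul, ← mul_assoc, mul_inv_cancel₀ (Nat.cast_ne_zero.mpr hm), one_mul,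
    sum_Icc_log_eq_log_factorial, exp_log (by positivity)]

theorem div_exp_one_le_pm {m : ℕ} (hm : m ≠ 0) : m / exp 1 ≤ pm m := by
  rw [← pow_le_pow_iff_left₀ (by positivity) (pm_pos m).le hm, pm_pow_self hm, div_pow,
    ← exp_nat_mul, mul_one, div_le_iff₀ (exp_pos _), ← div_le_iff₀' (by positivity)]
  exact pow_div_factorial_le_exp _ m.cast_nonneg m

theorem pm_le_self {m : ℕ} (hm : m ≠ 0) : pm m ≤ m := by
  rw [← pow_le_pow_iff_left₀ (pm_pos m).le m.cast_nonneg hm, pm_pow_self hm]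
  exact_mod_cast Nat.factorial_le_pow m

theorem mul_div_rpow_le_mul_div_rpow {x y c δ : ℝ} (hx : 0 < x) (hxy : x ≤ y) (hc : 0 ≤ c)
    (hδ1 : δ ≤ 1) : x * (c / x) ^ δ ≤ y * (c / y) ^ δ := by
  have key : ∀ z : ℝ, 0 < z → z * (c / z) ^ δ = z ^ (1 - δ) * c ^ δ := fun z hz => by
    rw [div_rpow hc hz.le, rpow_sub hz, rpow_one]
    field_simp
  rw [key x hx, key y (hx.trans_le hxy)]
  gcongr

theorem integral_le_sum_Ico_div_rpow {p δ : ℝ} (hp : 0 < p) (hδ0 : 0 < δ) (hδ1 : δ ≤ 1)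
    {a b : ℕ} (ha : 0 < a) (hab : a ≤ b) :
    p * ((b / p) ^ δ - (a / p) ^ δ) / δ ≤ ∑ j ∈ Ico a b, ((j : ℝ) / p) ^ (δ - 1) := by
  have hanti : AntitoneOn (fun x : ℝ => (x / p) ^ (δ - 1)) (Set.Icc a b) := by
    intro x hx y _ hxy
    have hx0 : 0 < x := lt_of_lt_of_le (by exact_mod_cast ha) hx.1
    exact rpow_le_rpow_of_nonpos (by positivity) (by gcongr) (by linarith)
  calc p * ((b / p) ^ δ - (a / p) ^ δ) / δ = ∫ x in (a : ℝ)..b, (x / p) ^ (δ - 1) := by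
        rw [intervalIntegral.integral_comp_div (fun y => y ^ (δ - 1)) hp.ne',
          integral_rpow (Or.inl (by linarith)), sub_add_cancel, smul_eq_mul, mul_div_assoc]
    _ ≤ _ := hanti.integral_le_sum_Ico hab

theorem sub_mul_div_rpow_le_sum_Icc_div_rpow {p δ γ : ℝ} (hδ0 : 0 < δ) (hδ1 : δ ≤ 1)
    (hγ : γ ≤ δ - 1) {a m : ℕ} (ha : 0 < a) (hap : a ≤ p) (hpm : p ≤ m) :
    (p - p * (a / p) ^ δ) / δ ≤ ∑ j ∈ Icc a m, ((j : ℝ) / p) ^ γ := by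
  have hp : 0 < p := lt_of_lt_of_le (by exact_mod_cast ha) hap
  have hceil : (1 : ℝ) ≤ (⌈p⌉₊ / p) ^ δ :=
    one_le_rpow ((one_le_div hp).mpr (Nat.le_ceil p)) hδ0.le
  calc (p - p * (a / p) ^ δ) / δ ≤ p * ((⌈p⌉₊ / p) ^ δ - (a / p) ^ δ) / δ := by
        gcongr
        nlinarith
    _ ≤ ∑ j ∈ Ico a ⌈p⌉₊, ((j : ℝ) / p) ^ (δ - 1) :=
        integral_le_sum_Ico_div_rpow hp hδ0 hδ1 ha (Nat.cast_le.mp (hap.trans (Nat.le_ceil p)))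
    _ ≤ ∑ j ∈ Ico a ⌈p⌉₊, ((j : ℝ) / p) ^ γ := by
        refine sum_le_sum fun j hj => ?_
        have hj := mem_Ico.mp hj
        exact rpow_le_rpow_of_exponent_ge (div_pos (by exact_mod_cast ha.trans_le hj.1) hp)
          ((div_le_one hp).mpr (Nat.lt_ceil.mp hj.2).le) hγ
    _ ≤ ∑ j ∈ Icc a m, ((j : ℝ) / p) ^ γ := by
        refine sum_le_sum_of_subset_of_nonneg (fun j hj => ?_) fun j _ _ => by positivity
        have hj := mem_Ico.mp hj
        exact mem_Icc.mpr ⟨hj.1, by exact_mod_cast (Nat.lt_ceil.mp hj.2).le.trans hpm⟩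

theorem exists_eps_kappa_of_lt {δ c : ℝ} (hδ : 0 < δ) (hδc : δ < c) :
    ∃ ε ∈ Ioo (0 : ℝ) 0.1, ∃ κb ∈ Ioo (0 : ℝ) (1 / 4),
      ∀ κ ∈ Ioc (0 : ℝ) κb, δ * (1 + 2 * ε) + κ ^ δ ≤ c := by
  set s := c - δ
  have hs : 0 < s := sub_pos.mpr hδc
  refine ⟨min (1 / 20) (s / (4 * δ)), ⟨by positivity, by norm_num⟩,
    min (1 / 8) ((s / 2) ^ δ⁻¹), ⟨by positivity, by norm_num⟩, fun κ ⟨hκ0, hκ⟩ => ?_⟩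
  have hε : δ * (2 * min (1 / 20) (s / (4 * δ))) ≤ s / 2 := by
    have := min_le_right (1 / 20 : ℝ) (s / (4 * δ))
    rw [le_div_iff₀ (by positivity)] at this
    nlinarith
  have hκδ : κ ^ δ ≤ s / 2 := calc
    κ ^ δ ≤ ((s / 2) ^ δ⁻¹) ^ δ := rpow_le_rpow hκ0.le (hκ.trans (min_le_right _ _)) hδ.le
    _ = s / 2 := by rw [← rpow_mul (by positivity), inv_mul_cancel₀ hδ.ne', rpow_one]
  linarith

theorem power_sum_lower_bound_negative_exponents_general (Δ C : ℝ)
    (hΔ : Δ ∈ Set.Ioo (0 : ℝ) (1 / (2 * Real.exp 1))) :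
    ∃ ε ∈ Set.Ioo (0 : ℝ) 0.1, ∃ κb ∈ Set.Ioo (0 : ℝ) (1/4),
      ∀ κ ∈ Set.Ioc (0 : ℝ) κb, ∃ m₀ : ℕ, ∀ m : ℕ, m₀ ≤ m →
        ∀ γ ∈ Set.Icc (-C) (-1 + 2 * Δ),
          1 + 2 * ε ≤ (m : ℝ)⁻¹ * ∑ j ∈ Finset.Icc ⌊κ * m⌋₊ m, ((j : ℝ) / pm m) ^ γ := by
  obtain ⟨hΔ0, hΔe⟩ := hΔ
  have he : exp 1 < 4 := exp_one_lt_d9.trans (by norm_num)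
  have hδe : 2 * Δ < 1 / exp 1 := by
    have : 1 / (2 * exp 1) * 2 = 1 / exp 1 := by field_simp
    linarith
  have hδ1 : 2 * Δ ≤ 1 := by
    linarith [(div_lt_one (exp_pos 1)).mpr (one_lt_exp_iff.mpr one_pos)]
  obtain ⟨ε, hε, κb, hκb, hconst⟩ := exists_eps_kappa_of_lt (by positivity) hδe
  refine ⟨ε, hε, κb, hκb, fun κ hκ => ⟨⌈κ⁻¹⌉₊, fun m hm γ hγ => ?_⟩⟩
  have hκm : 1 ≤ κ * m := by
    rw [← inv_mul_le_iff₀ hκ.1, mul_one]; exact Nat.ceil_le.mp hm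
  have hm' : (0 : ℝ) < m := pos_of_mul_pos_right (one_pos.trans_le hκm) hκ.1.le
  have hm : m ≠ 0 := by exact_mod_cast hm'.ne'
  set a := ⌊κ * m⌋₊
  have haκ : (a : ℝ) ≤ κ * m := Nat.floor_le (by positivity)
  have hap : (a : ℝ) ≤ pm m := calc
    (a : ℝ) ≤ m / exp 1 := by
      rw [le_div_iff₀ (exp_pos 1)]; nlinarith [hκ.2.trans hκb.2.le]
    _ ≤ pm m := div_exp_one_le_pm hm
  have hκδ : m * (a / m : ℝ) ^ (2 * Δ) ≤ m * κ ^ (2 * Δ) := by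
    gcongr; rwa [div_le_iff₀ hm']
  rw [le_inv_mul_iff₀ hm']
  calc m * (1 + 2 * ε) ≤ (m / exp 1 - m * κ ^ (2 * Δ)) / (2 * Δ) := by
        have := mul_le_mul_of_nonneg_left (hconst κ hκ) hm'.le
        rw [mul_one_div] at this
        rw [le_div_iff₀ (by positivity)]
        linarith
    _ ≤ (pm m - pm m * (a / pm m) ^ (2 * Δ)) / (2 * Δ) := by
        gcongr ?_ / _
        linarith [div_exp_one_le_pm hm, hκδ,
          mul_div_rpow_le_mul_div_rpow (pm_pos m) (pm_le_self hm) a.cast_nonneg hδ1]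
    _ ≤ _ := sub_mul_div_rpow_le_sum_Icc_div_rpow (by positivity) hδ1 (by linarith [hγ.2])
        (Nat.floor_pos.mpr hκm) hap (pm_le_self hm)

/-- Lemma 5.5(a): for `Δ ∈ (0, 1/(2e))` and `C > 1` there are `ε ∈ (0, 0.1)` and
`κ̄ ∈ (0, 1/4)` such that for every `κ ∈ (0, κ̄]` and all large `m`,
`inf_{γ ∈ [-C, -1+2Δ]} m⁻¹ ∑_{j=⌊κm⌋}^m (j/p_m)^γ ≥ 1 + 2ε`. -/
theorem power_sum_lower_bound_negative_exponents (Δ C : ℝ)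
    (hΔ : Δ ∈ Set.Ioo (0 : ℝ) (1 / (2 * Real.exp 1))) (hC : 1 < C) :
    ∃ ε ∈ Set.Ioo (0 : ℝ) 0.1, ∃ κb ∈ Set.Ioo (0 : ℝ) (1/4),
      ∀ κ ∈ Set.Ioc (0 : ℝ) κb, ∃ m₀ : ℕ, ∀ m : ℕ, m₀ ≤ m →
        ∀ γ ∈ Set.Icc (-C) (-1 + 2 * Δ),
          1 + 2 * ε ≤ (m : ℝ)⁻¹ * ∑ j ∈ Finset.Icc ⌊κ * m⌋₊ m, ((j : ℝ) / pm m) ^ γ :=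
  power_sum_lower_bound_negative_exponents_general Δ C hΔ
end

section
/- Let n ≥ 1 be an integer, z a nonzero complex number, and w any complex number. Define J_n(w) = Σ_{k=1}^{n} w^k / k and j̃_p = Σ_{k=p+1}^{n} z^k / k for 0 ≤ p ≤ n−1. Then J_n(w) = J_n(z) + ( Σ_{p=0}^{n-1} j̃_p (z^{−1}w)^p ) · (z^{−1}w − 1). -/
/-- Lemma 5.7(a): with `J_n(w) = ∑_{k=1}^n w^k/k` and `j̃_p = ∑_{k=p+1}^n z^k/k`,
`J_n(w) = J_n(z) + (∑_{p=0}^{n-1} j̃_p (z⁻¹w)^p)(z⁻¹w − 1)`. -/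
theorem log_filter_decomposition (n : ℕ) (hn : 1 ≤ n) (z : ℂ) (hz : z ≠ 0) (w : ℂ) :
    ∑ k ∈ Finset.Icc 1 n, w ^ k / (k : ℂ) =
      (∑ k ∈ Finset.Icc 1 n, z ^ k / (k : ℂ)) +
        (∑ p ∈ Finset.range n,
            (∑ k ∈ Finset.Icc (p + 1) n, z ^ k / (k : ℂ)) * (z⁻¹ * w) ^ p) *
          (z⁻¹ * w - 1) := by
  have hzw : z * (z⁻¹ * w) = w := by field_simp
  induction n with
  | zero => omega
  | succ n ih =>
    rcases Nat.eq_zero_or_pos n with h0 | h1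
    · subst h0
      simp only [Finset.Icc_self, Finset.sum_singleton, Finset.range_one, pow_one, pow_zero,
        Nat.cast_one, div_one, zero_add, mul_one]
      have : w = z * (z⁻¹ * w) := hzw.symm
      linear_combination -hzw
    · have ih' := ih h1
      have hsplit : ∀ f : ℕ → ℂ, ∀ a : ℕ, a ≤ n + 1 →
          ∑ k ∈ Finset.Icc a (n + 1), f k = (∑ k ∈ Finset.Icc a n, f k) + f (n + 1) := by
        intro f a ha
        rw [Finset.sum_Icc_succ_top ha]
      have hzu : ∀ m : ℕ, z ^ m * (z⁻¹ * w) ^ m = w ^ m := by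
        intro m; rw [← mul_pow, hzw]
      -- inner sums
      have hinner : ∀ p ∈ Finset.range (n + 1),
          (∑ k ∈ Finset.Icc (p + 1) (n + 1), z ^ k / (k : ℂ)) * (z⁻¹ * w) ^ p
            = ((∑ k ∈ Finset.Icc (p + 1) n, z ^ k / (k : ℂ)) * (z⁻¹ * w) ^ p)
              + (z ^ (n + 1) / ((n : ℂ) + 1)) * (z⁻¹ * w) ^ p := by
        intro p hp
        rw [hsplit _ (p + 1) (by have := Finset.mem_range.mp hp; omega)]
        push_cast
        ring
      rw [Finset.sum_congr rfl hinner, Finset.sum_add_distrib]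
      have hlast : ∑ p ∈ Finset.range (n + 1),
          (∑ k ∈ Finset.Icc (p + 1) n, z ^ k / (k : ℂ)) * (z⁻¹ * w) ^ p
          = ∑ p ∈ Finset.range n,
          (∑ k ∈ Finset.Icc (p + 1) n, z ^ k / (k : ℂ)) * (z⁻¹ * w) ^ p := by
        rw [Finset.sum_range_succ]
        simp
      rw [hlast, ← Finset.mul_sum]
      rw [hsplit _ 1 (by omega), hsplit _ 1 (by omega)]
      rw [ih']
      have hgeom : (∑ p ∈ Finset.range (n + 1), (z⁻¹ * w) ^ p) * (z⁻¹ * w - 1) = (z⁻¹ * w) ^ (n + 1) - 1 :=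
        geom_sum_mul (z⁻¹ * w) (n + 1)
      have hw : w ^ (n + 1) = z ^ (n + 1) * (z⁻¹ * w) ^ (n + 1) := (hzu (n + 1)).symm
      push_cast
      linear_combination -(z ^ (n + 1) / ((n : ℂ) + 1)) * hgeom + (1 / ((n : ℂ) + 1)) * hw
end

section
/- There exist constants K > 0 and δ ∈ (0, π) such that for all integers n ≥ 1 and all integers j with 1 ≤ j and λ_j = 2πj/n ≤ δ: | J_n(e^{iλ_j}) + log λ_j − (i/2)(π − λ_j) | ≤ K(λ_j² + j^{−1}), where J_n(z) = Σ_{k=1}^{n} z^k / k. In particular J_n(e^{iλ_j}) = −log λ_j + (i/2)(π − λ_j) + O(λ_j²) + O(j^{−1}). -/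
/-!
Abel summation bounds the tail `∑_{k>n} z^k/k` of the series of `-log (1 - z)` by
`2 / (|1 - z| (n + 1))` on the closed unit disc minus `1`. At `z = e^{it}`, `0 < t ≤ π`, the
factorisation `1 - z = 2 sin (t/2) e^{i(t-π)/2}` gives `-log (1 - z) = -log (2 sin (t/2)) + (i/2)(π - t)`,
and `log t - log (2 sin (t/2)) = O(t²)`. Jordan's inequality `|1 - z| ≥ 2t/π` turns the tail bound
into `π / (t (n + 1)) ≤ 1/(2j)` at `t = 2πj/n`.
-/

open Finset Filter Topology Complex
open scoped Real

section Abel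

variable {E : Type*} [NormedAddCommGroup E] [NormedSpace ℝ E]

theorem norm_sum_Ico_smul_sub_smul_sum_le {a : ℕ → E} {b : ℕ → ℝ} {m : ℕ} {M : ℝ}
    (hb : AntitoneOn b (Set.Ici m)) (hA : ∀ N, ‖∑ k ∈ Ico m N, a k‖ ≤ M) {N : ℕ} (hN : m ≤ N) :
    ‖∑ k ∈ Ico m (N + 1), b k • a k - b N • ∑ k ∈ Ico m (N + 1), a k‖ ≤ (b m - b N) * M := by
  induction N, hN using Nat.le_induction with
  | base => simp
  | succ N hN ih =>
    have hbN : b (N + 1) ≤ b N := hb (Set.mem_Ici.2 hN) (Set.mem_Ici.2 (by omega)) N.le_succ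
    calc ‖∑ k ∈ Ico m (N + 1 + 1), b k • a k - b (N + 1) • ∑ k ∈ Ico m (N + 1 + 1), a k‖
        = ‖(∑ k ∈ Ico m (N + 1), b k • a k - b N • ∑ k ∈ Ico m (N + 1), a k)
            + (b N - b (N + 1)) • ∑ k ∈ Ico m (N + 1), a k‖ := by
          rw [sum_Ico_succ_top (show m ≤ N + 1 by omega) (fun k => b k • a k),
            sum_Ico_succ_top (show m ≤ N + 1 by omega) a]
          congr 1
          module
      _ ≤ (b m - b N) * M + (b N - b (N + 1)) * M := by
          grw [norm_add_le, ih, norm_smul, Real.norm_of_nonneg (sub_nonneg.2 hbN), hA]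
          exact sub_nonneg.2 hbN
      _ = (b m - b (N + 1)) * M := by ring

/-- Abel's inequality. -/
theorem norm_sum_Ico_smul_le {a : ℕ → E} {b : ℕ → ℝ} {m : ℕ} {M : ℝ}
    (hb : AntitoneOn b (Set.Ici m)) (hb0 : ∀ k, m ≤ k → 0 ≤ b k)
    (hA : ∀ N, ‖∑ k ∈ Ico m N, a k‖ ≤ M) (N : ℕ) :
    ‖∑ k ∈ Ico m N, b k • a k‖ ≤ b m * M := by
  obtain hNm | ⟨N, hmN, rfl⟩ : N ≤ m ∨ ∃ N', m ≤ N' ∧ N = N' + 1 :=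
    (le_or_gt N m).imp_right fun h => ⟨N - 1, by omega, by omega⟩
  · have hM : 0 ≤ M := by simpa using hA m
    simpa [Ico_eq_empty_of_le hNm] using mul_nonneg (hb0 m le_rfl) hM
  · calc ‖∑ k ∈ Ico m (N + 1), b k • a k‖
        ≤ ‖∑ k ∈ Ico m (N + 1), b k • a k - b N • ∑ k ∈ Ico m (N + 1), a k‖
          + ‖b N • ∑ k ∈ Ico m (N + 1), a k‖ := norm_le_norm_sub_add _ _
      _ ≤ (b m - b N) * M + b N * M := by
          grw [norm_sum_Ico_smul_sub_smul_sum_le hb hA hmN, norm_smul,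
            Real.norm_of_nonneg (hb0 N hmN), hA]
          exact hb0 N hmN
      _ = b m * M := by ring

end Abel

namespace Real

theorem two_mul_div_pi_le_two_mul_sin_half {t : ℝ} (ht₀ : 0 ≤ t) (ht : t ≤ π) :
    2 * t / π ≤ 2 * sin (t / 2) := by
  have hjordan := mul_le_sin (x := t / 2) (by positivity) (by linarith)
  calc 2 * t / π = 2 * (2 / π * (t / 2)) := by ring
    _ ≤ 2 * sin (t / 2) := by gcongr

theorem abs_log_sub_log_two_mul_sin_half_le {t : ℝ} (ht₀ : 0 < t) (ht : t ≤ π) :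
    |log t - log (2 * sin (t / 2))| ≤ t ^ 2 := by
  have hupper := sin_lt (x := t / 2) (by positivity)
  have hcubic := sin_gt_sub_cube (x := t / 2) (by positivity)
  have hs := two_mul_div_pi_le_two_mul_sin_half ht₀.le ht
  have hs₀ : 0 < 2 * sin (t / 2) := lt_of_lt_of_le (by positivity) hs
  rw [← log_div ht₀.ne' hs₀.ne', abs_of_nonneg (log_nonneg ((one_le_div hs₀).2 (by linarith)))]
  refine (log_le_sub_one_of_pos (div_pos ht₀ hs₀)).trans ?_
  rw [div_sub_one hs₀.ne', div_le_iff₀ hs₀]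
  -- `t - 2 sin (t/2) < t³/24` while `t² · 2 sin (t/2) ≥ 2t³/π`
  have : t ^ 3 / 24 ≤ t ^ 2 * (2 * t / π) := by
    rw [show t ^ 2 * (2 * t / π) = t ^ 3 * (2 / π) by ring]
    have : (1 : ℝ) / 24 ≤ 2 / π := by
      rw [div_le_div_iff₀ (by norm_num) Real.pi_pos]; linarith [Real.pi_lt_four]
    nlinarith [pow_pos ht₀ 3]
  nlinarith [mul_le_mul_of_nonneg_left hs (sq_nonneg t)]

end Real

namespace Complex

theorem norm_sum_Ico_pow_le {w : ℂ} (hw : ‖w‖ ≤ 1) (hw1 : w ≠ 1) (m N : ℕ) :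
    ‖∑ k ∈ Ico m N, w ^ k‖ ≤ 2 / ‖1 - w‖ := by
  rcases le_total N m with hNm | hmN
  · simp [Ico_eq_empty_of_le hNm]
    positivity
  rw [geom_sum_Ico' hw1 hmN, norm_div]
  gcongr
  calc ‖w ^ m - w ^ N‖ ≤ ‖w‖ ^ m + ‖w‖ ^ N := by grw [norm_sub_le, norm_pow, norm_pow]
    _ ≤ 2 := by grw [pow_le_one₀ (norm_nonneg w) hw, pow_le_one₀ (norm_nonneg w) hw]; norm_num

/-- The paper's `J_n`. -/
noncomputable def truncLogSeries (n : ℕ) (z : ℂ) : ℂ := ∑ k ∈ Icc 1 n, z ^ k / k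

theorem truncLogSeries_eq_sum_range (n : ℕ) (z : ℂ) :
    truncLogSeries n z = ∑ k ∈ range (n + 1), z ^ k / k := by
  rw [range_eq_Ico, sum_eq_sum_Ico_succ_bot (by omega), zero_add, Ico_add_one_right_eq_Icc]
  simp [truncLogSeries]

theorem norm_truncLogSeries_add_log_le_of_norm_lt_one {w : ℂ} (hw : ‖w‖ < 1) (n : ℕ) :
    ‖truncLogSeries n w + log (1 - w)‖ ≤ 2 / ‖1 - w‖ / (n + 1) := by
  have hw1 : w ≠ 1 := by rintro rfl; simp at hw
  have htail (N : ℕ) : ‖∑ k ∈ Ico (n + 1) N, w ^ k / k‖ ≤ 2 / ‖1 - w‖ / (n + 1) := by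
    have hb : AntitoneOn (fun k : ℕ => (k : ℝ)⁻¹) (Set.Ici (n + 1)) := fun i hi j _ hij => by
      have : (0 : ℝ) < i := by exact_mod_cast (Nat.succ_pos n).trans_le hi
      dsimp only
      gcongr
    have := norm_sum_Ico_smul_le hb (fun k _ => by positivity)
      (norm_sum_Ico_pow_le hw.le hw1 (n + 1)) N
    simpa [Complex.real_smul, div_eq_inv_mul, mul_comm] using this
  have hlim : Tendsto (fun N => ∑ k ∈ Ico (n + 1) N, w ^ k / k) atTop
      (𝓝 (-log (1 - w) - truncLogSeries n w)) := by
    rw [truncLogSeries_eq_sum_range]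
    refine ((hasSum_taylorSeries_neg_log hw).tendsto_sum_nat.sub_const _).congr' ?_
    filter_upwards [eventually_ge_atTop (n + 1)] with N hN
    rw [sum_Ico_eq_sub _ hN]
  rw [← norm_neg, add_comm, neg_add']
  exact le_of_tendsto' hlim.norm htail

theorem one_sub_mem_slitPlane {z : ℂ} (hz : ‖z‖ ≤ 1) (hz1 : z ≠ 1) : 1 - z ∈ slitPlane := by
  rw [mem_slitPlane_iff, sub_re, one_re, sub_im, one_im, zero_sub, neg_ne_zero, sub_pos]
  by_contra! h
  have hre : z.re = 1 := le_antisymm ((re_le_norm z).trans hz) h.1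
  exact hz1 (ext hre h.2)

/-- Radial limit `r z → z`, `r → 1⁻`, of the open-disc case: both sides are continuous in `r` at `1`
because `1 - z` lies in the slit plane. -/
theorem norm_truncLogSeries_add_log_le {z : ℂ} (hz : ‖z‖ ≤ 1) (hz1 : z ≠ 1) (n : ℕ) :
    ‖truncLogSeries n z + log (1 - z)‖ ≤ 2 / ‖1 - z‖ / (n + 1) := by
  have hslit : 1 - ((1 : ℝ) : ℂ) * z ∈ slitPlane := by simpa using one_sub_mem_slitPlane hz hz1
  have hlhs : ContinuousAt (fun r : ℝ => truncLogSeries n (r * z) + log (1 - r * z)) 1 := by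
    unfold truncLogSeries
    fun_prop (disch := exact hslit)
  have hrhs : ContinuousAt (fun r : ℝ => 2 / ‖1 - r * z‖ / (n + 1)) 1 := by
    have : ‖1 - ((1 : ℝ) : ℂ) * z‖ ≠ 0 := norm_ne_zero_iff.2 (slitPlane_ne_zero hslit)
    fun_prop (disch := exact this)
  have key := le_of_tendsto_of_tendsto (b := 𝓝[<] (1 : ℝ))
    (hlhs.tendsto.mono_left nhdsWithin_le_nhds).norm (hrhs.tendsto.mono_left nhdsWithin_le_nhds)
    (eventually_of_mem (Ioo_mem_nhdsLT zero_lt_one) fun r hr =>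
      norm_truncLogSeries_add_log_le_of_norm_lt_one (by
        rw [norm_mul, norm_real, Real.norm_of_nonneg hr.1.le]
        exact mul_lt_one_of_nonneg_of_lt_one_left hr.1.le hr.2 hz) n)
  simpa using key

theorem one_sub_exp_I_mul_s11 (t : ℝ) :
    1 - exp (I * t) = (2 * Real.sin (t / 2) : ℝ) * exp (I * ((t - π) / 2 : ℝ)) := by
  have h : exp (I * ((t - π) / 2 : ℝ)) = -I * exp (I * (t / 2 : ℝ)) := by
    push_cast
    rw [show I * ((t - π) / 2) = I * (t / 2) + -(π / 2 * I) by ring, exp_add, exp_neg,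
      exp_pi_div_two_mul_I, inv_I]
    ring
  have hsq : exp (I * t) = exp (I * (t / 2 : ℝ)) ^ 2 := by
    rw [← exp_nat_mul]; push_cast; ring_nf
  have hinv : exp (-(t / 2 : ℝ) * I) = (exp (I * (t / 2 : ℝ)))⁻¹ := by
    rw [← exp_neg]; ring_nf
  rw [h, ofReal_mul, ofReal_sin, sin, hsq, hinv, mul_comm _ I]
  field_simp
  ring_nf
  rw [I_sq]
  push_cast
  ring

theorem log_one_sub_exp_I_mul_s11 {t : ℝ} (ht₀ : 0 < t) (ht : t < 2 * π) :
    log (1 - exp (I * t)) = Real.log (2 * Real.sin (t / 2)) - I / 2 * (π - t : ℝ) := by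
  have hsin : 0 < 2 * Real.sin (t / 2) := by
    have := Real.sin_pos_of_pos_of_lt_pi (x := t / 2) (by linarith) (by linarith)
    positivity
  rw [one_sub_exp_I_mul_s11, log_ofReal_mul hsin (exp_ne_zero _), log_exp]
  · push_cast; ring
  all_goals simp; linarith [Real.pi_pos]


theorem two_mul_div_pi_le_norm_one_sub_exp_I_mul {t : ℝ} (ht₀ : 0 ≤ t) (ht : t ≤ π) :
    2 * t / π ≤ ‖1 - exp (I * t)‖ := by
  have hs := Real.two_mul_div_pi_le_two_mul_sin_half ht₀ ht
  rw [norm_sub_rev, norm_exp_I_mul_ofReal_sub_one,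
    Real.norm_of_nonneg ((by positivity : 0 ≤ 2 * t / π).trans hs)]
  exact hs

theorem norm_truncLogSeries_exp_I_mul_add_log_sub_le {t : ℝ} (ht₀ : 0 < t) (ht : t ≤ π) (n : ℕ) :
    ‖truncLogSeries n (exp (I * t)) + Real.log t - I / 2 * (π - t : ℝ)‖ ≤
      t ^ 2 + π / (t * (n + 1)) := by
  have hnorm := two_mul_div_pi_le_norm_one_sub_exp_I_mul ht₀.le ht
  have hz₁ : exp (I * t) ≠ 1 := by
    intro h
    rw [h, sub_self, norm_zero] at hnorm
    linarith [show 0 < 2 * t / π by positivity]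
  have hz : ‖exp (I * t)‖ ≤ 1 := by rw [mul_comm, norm_exp_ofReal_mul_I]
  have hdecomp : truncLogSeries n (exp (I * t)) + Real.log t - I / 2 * (π - t : ℝ) =
      (truncLogSeries n (exp (I * t)) + log (1 - exp (I * t))) +
        (Real.log t - Real.log (2 * Real.sin (t / 2)) : ℝ) := by
    rw [log_one_sub_exp_I_mul_s11 ht₀ (by linarith [Real.pi_pos])]
    push_cast
    ring
  have hremainder : 2 / ‖1 - exp (I * t)‖ / (n + 1) ≤ π / (t * (n + 1)) := by
    calc 2 / ‖1 - exp (I * t)‖ / (n + 1) ≤ 2 / (2 * t / π) / (n + 1) := by gcongr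
      _ = π / (t * (n + 1)) := by field_simp
  rw [hdecomp, add_comm (t ^ 2)]
  grw [norm_add_le, norm_truncLogSeries_add_log_le hz hz₁, hremainder, norm_real, Real.norm_eq_abs,
    Real.abs_log_sub_log_two_mul_sin_half_le ht₀ ht]

end Complex

/-- Lemma 5.8(a): with `J_n(z) = ∑_{k=1}^n z^k/k` and `λ_j = 2πj/n`,
`J_n(e^{iλ_j}) = −log λ_j + (i/2)(π − λ_j) + O(λ_j²) + O(j⁻¹)`
uniformly in `n ≥ 1` and `1 ≤ j` with `λ_j ≤ δ`. -/
theorem truncated_log_series_expansion :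
    ∃ K > 0, ∃ δ : ℝ, 0 < δ ∧ δ < Real.pi ∧
      ∀ n : ℕ, 1 ≤ n → ∀ j : ℕ, 1 ≤ j → 2 * Real.pi * j / n ≤ δ →
        ‖(∑ k ∈ Finset.Icc 1 n,
                Complex.exp (Complex.I * (k : ℂ) * ((2 * Real.pi * j / n : ℝ) : ℂ)) / (k : ℂ)) +
              ((Real.log (2 * Real.pi * j / n) : ℝ) : ℂ) -
              Complex.I / 2 * ((Real.pi - 2 * Real.pi * j / n : ℝ) : ℂ)‖ ≤
          K * ((2 * Real.pi * j / n) ^ 2 + (j : ℝ)⁻¹) := by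
  refine ⟨1, one_pos, π / 2, by positivity, by linarith [Real.pi_pos], fun n hn j hj hδ => ?_⟩
  set t := 2 * π * j / n with ht
  have hn₀ : (0 : ℝ) < n := by exact_mod_cast hn
  have hj₀ : (0 : ℝ) < j := by exact_mod_cast hj
  have ht₀ : 0 < t := by positivity
  have hsum : ∑ k ∈ Icc 1 n, exp (I * k * t) / k = truncLogSeries n (exp (I * t)) :=
    sum_congr rfl fun k _ => by rw [← exp_nat_mul, mul_left_comm, ← mul_assoc]
  have hremainder : π / (t * (n + 1)) ≤ (j : ℝ)⁻¹ := by
    rw [div_le_iff₀ (by positivity), ht]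
    field_simp
    nlinarith [Real.pi_pos]
  rw [hsum, one_mul]
  grw [norm_truncLogSeries_exp_I_mul_add_log_sub_le ht₀ (by linarith [Real.pi_pos]) n, hremainder]
end

section
/- There exists a constant K > 0 such that for all integers n ≥ 2, all integers j with 1 ≤ j ≤ n/2, and all integers p with 0 ≤ p ≤ n−1: | Σ_{k=p+1}^{n} e^{ikλ_j} / k | ≤ K · min{ n / (j · max(p, 1)), log n }, where λ_j = 2πj/n. -/
/-!
With `z = e^{iλ_j}` the tail is `∑_{k=p+1}^n z^k / k`. Summation by parts against the antitone
weights `1/k` bounds it by `2/(p+1)` times a bound on the geometric partial sums of `z`, namely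
`2/|z - 1| ≤ π/λ_j = n/(2j)` by Jordan's inequality `sin x ≥ 2x/π`; this gives `n/(j(p+1))`.
Independently, the triangle inequality bounds it by the harmonic number `H_n ≤ 1 + log n`,
which is at most `3 log n` for `n ≥ 2`.
-/

open Finset Complex Real

lemma norm_geom_sum_le {𝕜 : Type*} [NormedDivisionRing 𝕜] {z : 𝕜} (hz : ‖z‖ ≤ 1) (hz1 : z ≠ 1)
    (m : ℕ) : ‖∑ i ∈ range m, z ^ i‖ ≤ 2 / ‖z - 1‖ := by
  rw [geom_sum_eq hz1, norm_div]
  gcongr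
  calc ‖z ^ m - 1‖ ≤ ‖z‖ ^ m + ‖(1 : 𝕜)‖ := by rw [← norm_pow]; exact norm_sub_le _ _
    _ ≤ 2 := by rw [norm_one]; linarith [pow_le_one₀ (norm_nonneg z) hz (n := m)]

lemma norm_sum_Ico_smul_le_of_antitoneOn {E : Type*} [SeminormedAddCommGroup E]
    [NormedSpace ℝ E] {f : ℕ → ℝ} {g : ℕ → E} {M : ℝ} {m n : ℕ} (hmn : m < n)
    (hf : AntitoneOn f (Set.Icc m (n - 1))) (hf0 : 0 ≤ f (n - 1))
    (hg : ∀ k, ‖∑ i ∈ range k, g i‖ ≤ M) :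
    ‖∑ i ∈ Ico m n, f i • g i‖ ≤ 2 * f m * M := by
  have hfm : 0 ≤ f m := hf0.trans (hf ⟨le_rfl, by omega⟩ ⟨by omega, le_rfl⟩ (by omega))
  have hstep : ∀ i ∈ Ico m (n - 1), ‖(f (i + 1) - f i) • ∑ k ∈ range (i + 1), g k‖ ≤
      -(f (i + 1) - f i) * M := by
    intro i hi
    rw [mem_Ico] at hi
    have hdec : f (i + 1) ≤ f i := hf ⟨hi.1, by omega⟩ ⟨by omega, by omega⟩ (by omega)
    rw [norm_smul, Real.norm_of_nonpos (by linarith)]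
    exact mul_le_mul_of_nonneg_left (hg _) (by linarith)
  rw [sum_Ico_by_parts f g hmn]
  calc _ ≤ ‖f (n - 1) • ∑ i ∈ range n, g i‖ + ‖f m • ∑ i ∈ range m, g i‖ +
        ∑ i ∈ Ico m (n - 1), ‖(f (i + 1) - f i) • ∑ k ∈ range (i + 1), g k‖ :=
        (norm_sub_le _ _).trans (add_le_add (norm_sub_le _ _) (norm_sum_le _ _))
    _ ≤ f (n - 1) * M + f m * M + ∑ i ∈ Ico m (n - 1), -(f (i + 1) - f i) * M := by
        rw [norm_smul, norm_smul, Real.norm_of_nonneg hf0, Real.norm_of_nonneg hfm]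
        gcongr with i hi
        · exact hg n
        · exact hg m
        · exact hstep i hi
    _ = 2 * f m * M := by
        rw [← sum_mul, sum_neg_distrib, sum_Ico_sub f (by omega)]
        ring

lemma mul_le_norm_exp_I_mul_ofReal_sub_one {θ : ℝ} (h0 : 0 ≤ θ) (hπ : θ ≤ π) :
    2 / π * θ ≤ ‖exp (I * θ) - 1‖ := by
  have hsin : 2 / π * (θ / 2) ≤ Real.sin (θ / 2) :=
    mul_le_sin (by linarith) (by linarith [pi_pos])
  have hθ : 0 ≤ 2 / π * (θ / 2) := by positivity
  rw [norm_exp_I_mul_ofReal_sub_one, Real.norm_of_nonneg (by linarith)]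
  linarith

lemma norm_sum_Icc_exp_mul_div_le {θ : ℝ} (h0 : 0 < θ) (hπ : θ ≤ π) {p n : ℕ} (hpn : p < n) :
    ‖∑ k ∈ Icc (p + 1) n, exp (I * k * θ) / k‖ ≤ 2 * π / (θ * (p + 1)) := by
  set z := exp (I * θ)
  have hz : ‖z‖ = 1 := norm_exp_I_mul_ofReal θ
  have hz1 : 2 / π * θ ≤ ‖z - 1‖ := mul_le_norm_exp_I_mul_ofReal_sub_one h0.le hπ
  have hlow : 0 < 2 / π * θ := by positivity
  have hz_ne : z ≠ 1 := fun h => by rw [h, sub_self, norm_zero] at hz1; linarith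
  have hsum : ∑ k ∈ Icc (p + 1) n, exp (I * k * θ) / k =
      ∑ k ∈ Ico (p + 1) (n + 1), (k : ℝ)⁻¹ • z ^ k := by
    rw [Ico_add_one_right_eq_Icc]
    refine sum_congr rfl fun k _ => ?_
    rw [← Complex.exp_nat_mul, Complex.real_smul, div_eq_inv_mul]
    push_cast
    ring_nf
  have hanti : AntitoneOn (fun k : ℕ => (k : ℝ)⁻¹) (Set.Icc (p + 1) (n + 1 - 1)) :=
    fun a ha b _ hab =>
      inv_anti₀ (Nat.cast_pos.mpr (by have := ha.1; omega)) (by exact_mod_cast hab)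
  rw [hsum]
  calc _ ≤ 2 * ((p + 1 : ℕ) : ℝ)⁻¹ * (2 / (2 / π * θ)) :=
        norm_sum_Ico_smul_le_of_antitoneOn (by omega) hanti (by positivity)
          fun k => (norm_geom_sum_le hz.le hz_ne k).trans (by gcongr)
    _ = 2 * π / (θ * (p + 1)) := by push_cast; field_simp

lemma sum_Icc_inv_le_one_add_log (p n : ℕ) :
    ∑ k ∈ Icc (p + 1) n, (k : ℝ)⁻¹ ≤ 1 + Real.log n := by
  calc ∑ k ∈ Icc (p + 1) n, (k : ℝ)⁻¹ ≤ ∑ k ∈ Icc 1 n, (k : ℝ)⁻¹ :=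
        sum_le_sum_of_subset_of_nonneg (Icc_subset_Icc_left (by omega)) fun _ _ _ => by positivity
    _ = harmonic n := by simp [harmonic_eq_sum_Icc]
    _ ≤ 1 + Real.log n := harmonic_le_one_add_log n

lemma norm_sum_Icc_exp_mul_div_le_one_add_log (θ : ℝ) (p n : ℕ) :
    ‖∑ k ∈ Icc (p + 1) n, exp (I * k * θ) / k‖ ≤ 1 + Real.log n := by
  refine (norm_sum_le _ _).trans (le_of_eq_of_le (sum_congr rfl fun k _ => ?_)
    (sum_Icc_inv_le_one_add_log p n))
  rw [norm_div, mul_assoc, ← ofReal_natCast, ← ofReal_mul, norm_exp_I_mul_ofReal]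
  simp

/-- Lemma 5.8(b): uniform bound on the tail coefficients
`j̃_{λ_j p} = ∑_{k=p+1}^n e^{ikλ_j}/k` of the truncated logarithmic filter:
`|j̃_{λ_j p}| ≤ K min{ n/(j max(p,1)), log n }`. -/
theorem truncated_log_filter_tail_bound :
    ∃ K > 0, ∀ n : ℕ, 2 ≤ n → ∀ j : ℕ, 1 ≤ j → (j : ℝ) ≤ (n : ℝ) / 2 →
      ∀ p : ℕ, p ≤ n - 1 →
        ‖∑ k ∈ Finset.Icc (p + 1) n,
            Complex.exp (Complex.I * (k : ℂ) * ((2 * Real.pi * j / n : ℝ) : ℂ)) / (k : ℂ)‖ ≤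
          K * min ((n : ℝ) / (j * max (p : ℝ) 1)) (Real.log n) := by
  refine ⟨3, by norm_num, fun n hn j hj hjn p hp => ?_⟩
  have hn0 : (0 : ℝ) < n := by positivity
  have hj0 : (0 : ℝ) < j := by exact_mod_cast hj
  have hθ0 : 0 < 2 * π * j / n := by positivity
  have hθπ : 2 * π * j / n ≤ π := by
    rw [div_le_iff₀ hn0]; nlinarith [pi_pos]
  have hlog : 1 / 2 < Real.log n :=
    (Real.log_two_gt_d9.trans_le' (by norm_num)).trans_le (Real.log_le_log (by norm_num)
      (by exact_mod_cast hn))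
  rw [mul_min_of_nonneg _ _ (by norm_num)]
  refine le_min ?_ ((norm_sum_Icc_exp_mul_div_le_one_add_log _ p n).trans (by linarith))
  calc _ ≤ 2 * π / (2 * π * j / n * (p + 1)) := norm_sum_Icc_exp_mul_div_le hθ0 hθπ (by omega)
    _ = n / (j * (p + 1)) := by field_simp
    _ ≤ n / (j * max (p : ℝ) 1) := by gcongr; exact max_le (by linarith) (by simp)
    _ ≤ 3 * (n / (j * max (p : ℝ) 1)) := by
        linarith [show 0 ≤ (n : ℝ) / (j * max (p : ℝ) 1) by positivity]
end

section
/- For every κ ∈ (0, 1/8) there exist η > 0, c > 0 and an integer M such that for all integers n, m with M ≤ m and m ≤ c·n, and for all real numbers Q₀, Q₁, Q₂, Q₃: m^{−1} Σ_{j=⌊κm⌋}^{m} | (1 − e^{iλ_j})³ Q₃ + (1 − e^{iλ_j})² Q₂ + (1 − e^{iλ_j}) Q₁ + Q₀ |² ≥ η ( m⁶ n^{−6} Q₃² + m⁴ n^{−4} Q₂² + m² n^{−2} Q₁² + Q₀² ), where λ_j = 2πj/n. -/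
/-!
Write `p(w) = Q₃ w³ + Q₂ w² + Q₁ w + Q₀` and `w_j = 1 - e^{iλ_j}`. For `j ≤ m ≤ n / 2` we have
`|w_j| ≤ λ_j ≤ 2π u` with `u = m / n`, and by Jordan's inequality nodes whose indices differ by at
least `L = ⌊m / 16⌋` are `u / 8`-separated. Splitting `[⌊κm⌋, ⌊κm⌋ + 4L)` into four blocks of
length `L` yields `L` quadruples of such nodes. Divided by `u`, every quadruple lies in a fixed
compact set of separated configurations, on which the Vandermonde matrix is uniformly invertible.
Hence `∑ₖ u^{2k} Qₖ² ≲ ∑ |p(w_j)|²` over each quadruple, and summing over the `L ≍ m` quadruples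
gives the bound.
-/

open Complex Finset Matrix
open scoped Real

theorem Matrix.exists_pos_mul_norm_le_norm_mulVec {𝕜 ι : Type*} [RCLike 𝕜] [Fintype ι]
    {K : Set (Matrix ι ι 𝕜)} (hK : IsCompact K) (hinj : ∀ A ∈ K, Function.Injective A.mulVec) :
    ∃ η > 0, ∀ A ∈ K, ∀ c : ι → 𝕜, η * ‖c‖ ≤ ‖A *ᵥ c‖ := by
  have hcont : Continuous fun p : Matrix ι ι 𝕜 × (ι → 𝕜) => ‖p.1 *ᵥ p.2‖ :=
    (continuous_fst.matrix_mulVec continuous_snd).norm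
  obtain ⟨η, hη, hmin⟩ := (hK.prod (isCompact_sphere (0 : ι → 𝕜) 1)).exists_forall_le'
    hcont.continuousOn (a := 0) fun ⟨A, c⟩ ⟨hA, hc⟩ => norm_pos_iff.mpr fun h => by
      obtain rfl : c = 0 := hinj A hA (h.trans (mulVec_zero A).symm)
      simp at hc
  refine ⟨η, hη, fun A hA c => ?_⟩
  rcases eq_or_ne c 0 with rfl | hc
  · simp
  have hc' : 0 < ‖c‖ := norm_pos_iff.mpr hc
  have := hmin (A, (‖c‖⁻¹ : 𝕜) • c) ⟨hA, by simp [norm_smul, hc'.ne']⟩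
  rw [mulVec_smul, norm_smul, norm_inv, RCLike.norm_ofReal, abs_norm] at this
  rwa [le_inv_mul_iff₀ hc', mul_comm] at this

theorem Matrix.vandermonde_smul_mulVec {R : Type*} [CommRing R] {n : ℕ} (a : R)
    (z c : Fin n → R) :
    vandermonde (a • z) *ᵥ c = vandermonde z *ᵥ fun k => a ^ (k : ℕ) * c k := by
  ext i
  simp only [mulVec, dotProduct, vandermonde_apply, Pi.smul_apply, smul_eq_mul, mul_pow]
  exact Finset.sum_congr rfl fun k _ => by ring

theorem Matrix.exists_pos_mul_norm_le_norm_vandermonde_mulVec {𝕜 : Type*} [RCLike 𝕜] {n : ℕ}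
    (R : ℝ) {δ : ℝ} (hδ : 0 < δ) :
    ∃ η > 0, ∀ z : Fin n → 𝕜, ‖z‖ ≤ R → (Pairwise fun i j => δ ≤ ‖z i - z j‖) →
      ∀ c, η * ‖c‖ ≤ ‖vandermonde z *ᵥ c‖ := by
  set S := Metric.closedBall (0 : Fin n → 𝕜) R ∩ ⋂ i, ⋂ j, ⋂ (_ : i ≠ j), {z | δ ≤ ‖z i - z j‖}
  have hS : IsCompact S := (isCompact_closedBall _ _).inter_right <|
    isClosed_iInter fun i => isClosed_iInter fun j => isClosed_iInter fun _ =>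
      isClosed_le continuous_const ((continuous_apply i).sub (continuous_apply j)).norm
  have hcont : Continuous (vandermonde : (Fin n → 𝕜) → Matrix (Fin n) (Fin n) 𝕜) :=
    continuous_matrix fun i j => (continuous_apply i).pow j
  obtain ⟨η, hη, h⟩ := exists_pos_mul_norm_le_norm_mulVec (hS.image hcont) <| by
    rintro _ ⟨z, ⟨-, hz⟩, rfl⟩
    have hinj : Function.Injective z := fun i j hij => by
      by_contra hne
      have := Set.mem_iInter.mp (Set.mem_iInter.mp (Set.mem_iInter.mp hz i) j) hne
      simp only [Set.mem_ofPred_eq, hij, sub_self, norm_zero] at this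
      linarith
    exact mulVec_injective_iff_isUnit.mpr <| (isUnit_iff_isUnit_det _).mpr
      (det_vandermonde_ne_zero_iff.mpr hinj).isUnit
  refine ⟨η, hη, fun z hR hsep => h _ ⟨z, ⟨mem_closedBall_zero_iff.mpr hR, ?_⟩, rfl⟩⟩
  simpa [Set.mem_iInter] using fun i j hij => hsep hij

theorem Matrix.exists_pos_mul_norm_le_norm_vandermonde_mulVec_of_scale {𝕜 : Type*} [RCLike 𝕜]
    {n : ℕ} (R : ℝ) {δ : ℝ} (hδ : 0 < δ) :
    ∃ η > 0, ∀ u : ℝ, 0 < u → ∀ w : Fin n → 𝕜, ‖w‖ ≤ R * u →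
      (Pairwise fun i j => δ * u ≤ ‖w i - w j‖) →
      ∀ c, η * ‖fun k : Fin n => (u : 𝕜) ^ (k : ℕ) * c k‖ ≤ ‖vandermonde w *ᵥ c‖ := by
  obtain ⟨η, hη, h⟩ := exists_pos_mul_norm_le_norm_vandermonde_mulVec (𝕜 := 𝕜) (n := n) R hδ
  refine ⟨η, hη, fun u hu w hR hsep c => ?_⟩
  have hu' : (u : 𝕜) ≠ 0 := by exact_mod_cast hu.ne'
  have hnorm : ‖(u : 𝕜)⁻¹‖ = u⁻¹ := by rw [norm_inv, RCLike.norm_ofReal, abs_of_pos hu]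
  rw [← smul_inv_smul₀ hu' w, vandermonde_smul_mulVec]
  refine h _ ?_ (fun i j hij => show δ ≤ ‖_ - _‖ from ?_) _
  · rw [norm_smul, hnorm, inv_mul_le_iff₀ hu, mul_comm]
    exact hR
  · rw [Pi.smul_apply, Pi.smul_apply, ← smul_sub, norm_smul, hnorm, le_inv_mul_iff₀ hu, mul_comm]
    exact hsep hij

theorem Pi.sq_norm_le_sum_sq_norm {ι E : Type*} [Fintype ι] [SeminormedAddCommGroup E]
    (x : ι → E) : ‖x‖ ^ 2 ≤ ∑ i, ‖x i‖ ^ 2 := by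
  have h : ‖x‖ ≤ √(∑ i, ‖x i‖ ^ 2) := (pi_norm_le_iff_of_nonneg (Real.sqrt_nonneg _)).mpr
    fun i => Real.le_sqrt_of_sq_le <| single_le_sum (fun j _ => sq_nonneg ‖x j‖) (mem_univ i)
  calc ‖x‖ ^ 2 ≤ √(∑ i, ‖x i‖ ^ 2) ^ 2 := by gcongr
    _ = ∑ i, ‖x i‖ ^ 2 := Real.sq_sqrt (sum_nonneg fun i _ => sq_nonneg _)

theorem Pi.sum_sq_norm_le_card_mul_sq_norm {ι E : Type*} [Fintype ι]
    [SeminormedAddCommGroup E] (x : ι → E) : ∑ i, ‖x i‖ ^ 2 ≤ Fintype.card ι * ‖x‖ ^ 2 := by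
  calc ∑ i, ‖x i‖ ^ 2 ≤ ∑ _i : ι, ‖x‖ ^ 2 :=
      sum_le_sum fun i _ => by gcongr; exact norm_le_pi_norm x i
    _ = _ := by simp

theorem norm_one_sub_exp_I_mul_le (θ : ℝ) : ‖1 - exp (I * θ)‖ ≤ |θ| := by
  rw [norm_sub_rev]
  exact Real.norm_exp_I_mul_ofReal_sub_one_le

theorem mul_abs_sub_le_norm_exp_I_mul_sub {α β : ℝ} (h : |α - β| ≤ π) :
    2 / π * |α - β| ≤ ‖exp (I * α) - exp (I * β)‖ := by
  have hfac : exp (I * α) - exp (I * β) = exp (I * β) * (exp (I * ↑(α - β)) - 1) := by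
    rw [mul_sub, ← exp_add]
    push_cast
    ring_nf
  have hsin := Real.mul_abs_le_abs_sin (x := (α - β) / 2) (by rw [abs_div]; linarith)
  rw [hfac, norm_mul, norm_exp_I_mul_ofReal, one_mul, norm_exp_I_mul_ofReal_sub_one, norm_mul,
    Real.norm_eq_abs, Real.norm_eq_abs, abs_two, abs_div, abs_two] at *
  linarith

noncomputable def oneSubExpFreq (n j : ℕ) : ℂ := 1 - exp (I * ((2 * π * j / n : ℝ) : ℂ))

theorem norm_oneSubExpFreq_le (n j : ℕ) : ‖oneSubExpFreq n j‖ ≤ 2 * π * j / n :=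
  (norm_one_sub_exp_I_mul_le _).trans (abs_of_nonneg (by positivity)).le

theorem le_norm_oneSubExpFreq_sub {n i j : ℕ} (hij : i ≤ j) (hj : 2 * j ≤ n) :
    4 * ((j : ℝ) - i) / n ≤ ‖oneSubExpFreq n i - oneSubExpFreq n j‖ := by
  rcases Nat.eq_zero_or_pos n with rfl | hn
  · simp
  have hn' : (0 : ℝ) < n := by exact_mod_cast hn
  have hij' : (i : ℝ) ≤ j := by exact_mod_cast hij
  have hj' : 2 * (j : ℝ) ≤ n := by exact_mod_cast hj
  have habs : |2 * π * j / n - 2 * π * i / n| = 2 * π * ((j : ℝ) - i) / n := by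
    rw [← sub_div, ← mul_sub, abs_of_nonneg (by positivity)]
  rw [oneSubExpFreq, oneSubExpFreq, sub_sub_sub_cancel_left]
  refine le_of_eq_of_le ?_ (mul_abs_sub_le_norm_exp_I_mul_sub ?_)
  · rw [habs]
    field_simp
    ring
  · rw [habs, div_le_iff₀ hn']
    nlinarith [Real.pi_pos]

theorem norm_oneSubExpFreq_comp_le {ι : Type*} [Fintype ι] (n : ℕ) {m : ℕ} {j : ι → ℕ}
    (hjm : ∀ i, j i ≤ m) : ‖fun i => oneSubExpFreq n (j i)‖ ≤ 2 * π * (m / n) :=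
  (pi_norm_le_iff_of_nonneg (by positivity)).mpr fun i =>
    (norm_oneSubExpFreq_le n (j i)).trans <| by
      rw [← mul_div_assoc]
      gcongr
      exact_mod_cast hjm i

theorem pairwise_le_norm_oneSubExpFreq_sub {ι : Type*} [LinearOrder ι] {n m L : ℕ}
    (hmn : 2 * m ≤ n) (hL : m ≤ 32 * L) {j : ι → ℕ} (hjm : ∀ i, j i ≤ m)
    (hjL : ∀ i i', i < i' → j i + L ≤ j i') :
    Pairwise fun i i' =>
      1 / 8 * (m / n : ℝ) ≤ ‖oneSubExpFreq n (j i) - oneSubExpFreq n (j i')‖ := by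
  have hlt : ∀ i i', i < i' →
      1 / 8 * (m / n : ℝ) ≤ ‖oneSubExpFreq n (j i) - oneSubExpFreq n (j i')‖ := fun i i' hii' => by
    have hgap := hjL i i' hii'
    refine le_trans ?_ (le_norm_oneSubExpFreq_sub (by omega) (by have := hjm i'; omega))
    have hgap' : (L : ℝ) ≤ j i' - j i := by
      rw [le_sub_iff_add_le']
      exact_mod_cast hgap
    have hL' : (m : ℝ) ≤ 32 * L := by exact_mod_cast hL
    calc 1 / 8 * (m / n : ℝ) = (m / 8 : ℝ) / n := by ring
      _ ≤ 4 * ((j i' : ℝ) - j i) / n := by gcongr; linarith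
  intro i i' hne
  rcases hne.lt_or_gt with h | h
  · exact hlt i i' h
  · rw [norm_sub_rev]
    exact hlt i' i h

theorem exists_weighted_sq_le_sum_sq_at_four_freqs :
    ∃ C > 0, ∀ n m L : ℕ, 0 < m → 2 * m ≤ n → m ≤ 32 * L → ∀ j : Fin 4 → ℕ, (∀ i, j i ≤ m) →
      (∀ i i', i < i' → j i + L ≤ j i') → ∀ Q₀ Q₁ Q₂ Q₃ : ℝ,
        (m : ℝ) ^ 6 / (n : ℝ) ^ 6 * Q₃ ^ 2 + (m : ℝ) ^ 4 / (n : ℝ) ^ 4 * Q₂ ^ 2 +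
            (m : ℝ) ^ 2 / (n : ℝ) ^ 2 * Q₁ ^ 2 + Q₀ ^ 2 ≤
          C * ∑ i, ‖oneSubExpFreq n (j i) ^ 3 * (Q₃ : ℂ) + oneSubExpFreq n (j i) ^ 2 * (Q₂ : ℂ) +
            oneSubExpFreq n (j i) * (Q₁ : ℂ) + (Q₀ : ℂ)‖ ^ 2 := by
  obtain ⟨η, hη, hV⟩ :=
    exists_pos_mul_norm_le_norm_vandermonde_mulVec_of_scale (𝕜 := ℂ) (n := 4) (2 * π)
      (δ := 1 / 8) (by norm_num)
  refine ⟨4 / η ^ 2, by positivity, fun n m L hm hmn hL j hjm hjL Q₀ Q₁ Q₂ Q₃ => ?_⟩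
  set u : ℝ := m / n with hu_def
  have hu : 0 < u := div_pos (by exact_mod_cast hm) (by exact_mod_cast (by omega : 0 < n))
  set w : Fin 4 → ℂ := fun i => oneSubExpFreq n (j i)
  set c : Fin 4 → ℂ := ![Q₀, Q₁, Q₂, Q₃]
  have hmain := hV u hu w (norm_oneSubExpFreq_comp_le n hjm)
    (pairwise_le_norm_oneSubExpFreq_sub hmn hL hjm hjL) c
  have hlhs : (m : ℝ) ^ 6 / (n : ℝ) ^ 6 * Q₃ ^ 2 + (m : ℝ) ^ 4 / (n : ℝ) ^ 4 * Q₂ ^ 2 +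
      (m : ℝ) ^ 2 / (n : ℝ) ^ 2 * Q₁ ^ 2 + Q₀ ^ 2 = ∑ k : Fin 4, ‖(u : ℂ) ^ (k : ℕ) * c k‖ ^ 2 := by
    have hterm : ∀ (k : ℕ) (q : ℝ), ‖(u : ℂ) ^ k * q‖ ^ 2 = u ^ (2 * k) * q ^ 2 := fun k q => by
      rw [norm_mul, norm_pow, norm_real, norm_real, Real.norm_eq_abs, Real.norm_eq_abs,
        abs_of_pos hu, mul_pow, ← pow_mul, sq_abs, mul_comm k]
    simp only [Fin.sum_univ_four, Fin.coe_ofNat_eq_mod, Nat.reduceMod, Matrix.cons_val, c, hterm]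
    rw [hu_def]
    ring
  have hrhs : ∀ i, (vandermonde w *ᵥ c) i =
      w i ^ 3 * (Q₃ : ℂ) + w i ^ 2 * (Q₂ : ℂ) + w i * (Q₁ : ℂ) + (Q₀ : ℂ) := fun i => by
    simp only [mulVec, dotProduct, vandermonde_apply, Fin.sum_univ_four, Fin.coe_ofNat_eq_mod,
      Nat.reduceMod, Matrix.cons_val, c]
    ring
  calc _ = ∑ k : Fin 4, ‖(u : ℂ) ^ (k : ℕ) * c k‖ ^ 2 := hlhs
    _ ≤ 4 * ‖fun k : Fin 4 => (u : ℂ) ^ (k : ℕ) * c k‖ ^ 2 := by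
      simpa using Pi.sum_sq_norm_le_card_mul_sq_norm fun k : Fin 4 => (u : ℂ) ^ (k : ℕ) * c k
    _ ≤ 4 * (‖vandermonde w *ᵥ c‖ / η) ^ 2 := by
      gcongr
      rwa [le_div_iff₀ hη, mul_comm]
    _ ≤ 4 / η ^ 2 * ∑ i, ‖(vandermonde w *ᵥ c) i‖ ^ 2 := by
      rw [div_pow, mul_div_assoc', div_mul_eq_mul_div]
      gcongr
      exact Pi.sq_norm_le_sum_sq_norm _
    _ = _ := by simp only [hrhs, w]

theorem Finset.sum_range_mul_eq_sum_sum {M : Type*} [AddCommMonoid M] (f : ℕ → M) (k L : ℕ) :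
    ∑ j ∈ range (k * L), f j = ∑ i ∈ range k, ∑ t ∈ range L, f (i * L + t) := by
  induction k with
  | zero => simp
  | succ k ih => rw [Nat.succ_mul, sum_range_add, ih, sum_range_succ]

theorem Finset.mul_le_sum_Icc_of_forall_le_sum_fin {f : ℕ → ℝ} (hf : ∀ j, 0 ≤ f j)
    {a k L m : ℕ} (h : a + k * L ≤ m + 1) {S C : ℝ} (hC : 0 ≤ C)
    (hS : ∀ t < L, S ≤ C * ∑ i : Fin k, f (a + i * L + t)) :
    L * S ≤ C * ∑ j ∈ Icc a m, f j := by
  have hblocks : ∑ t ∈ range L, ∑ i : Fin k, f (a + i * L + t) = ∑ j ∈ Ico a (a + k * L), f j := by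
    rw [sum_comm, Fin.sum_univ_eq_sum_range (fun i => ∑ t ∈ range L, f (a + i * L + t)),
      sum_Ico_eq_sum_range, Nat.add_sub_cancel_left, sum_range_mul_eq_sum_sum]
    simp only [add_assoc]
  calc L * S = ∑ _t ∈ range L, S := by rw [sum_const, card_range, nsmul_eq_mul]
    _ ≤ ∑ t ∈ range L, C * ∑ i : Fin k, f (a + i * L + t) :=
      sum_le_sum fun t ht => hS t (mem_range.mp ht)
    _ = C * ∑ j ∈ Ico a (a + k * L), f j := by rw [← mul_sum, hblocks]
    _ ≤ C * ∑ j ∈ Icc a m, f j := mul_le_mul_of_nonneg_left (sum_le_sum_of_subset_of_nonneg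
        (fun j hj => by simp only [mem_Ico, mem_Icc] at hj ⊢; omega) fun j _ _ => hf j) hC

theorem Nat.floor_mul_add_four_mul_div_sixteen_le {κ : ℝ} (h0 : 0 ≤ κ) (h8 : κ ≤ 1 / 8) (m : ℕ) :
    ⌊κ * m⌋₊ + 4 * (m / 16) ≤ m := by
  have hfloor : (⌊κ * m⌋₊ : ℝ) ≤ m / 8 := (Nat.floor_le (by positivity)).trans (by nlinarith)
  have hdiv : ((16 * (m / 16) : ℕ) : ℝ) ≤ m := by exact_mod_cast Nat.mul_div_le m 16
  have : ((⌊κ * m⌋₊ + 4 * (m / 16) : ℕ) : ℝ) ≤ m := by push_cast at hdiv ⊢; linarith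
  exact_mod_cast this

/-- Lemma 5.10(a): deterministic anti-concentration lower bound, with `λ_j = 2πj/n`:
`m⁻¹ ∑_{j=⌊κm⌋}^m |(1−e^{iλ_j})³Q₃ + (1−e^{iλ_j})²Q₂ + (1−e^{iλ_j})Q₁ + Q₀|²
  ≥ η (m⁶n⁻⁶Q₃² + m⁴n⁻⁴Q₂² + m²n⁻²Q₁² + Q₀²)`,
where `η, c, M` do not depend on `Q₀,…,Q₃`. -/
theorem trig_poly_anticoncentration (κ : ℝ) (hκ : κ ∈ Set.Ioo (0 : ℝ) (1/8)) :
    ∃ η > 0, ∃ c > 0, ∃ M : ℕ, ∀ n m : ℕ, M ≤ m → (m : ℝ) ≤ c * n →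
      ∀ Q₀ Q₁ Q₂ Q₃ : ℝ,
        η * ((m : ℝ) ^ 6 / (n : ℝ) ^ 6 * Q₃ ^ 2 + (m : ℝ) ^ 4 / (n : ℝ) ^ 4 * Q₂ ^ 2 +
            (m : ℝ) ^ 2 / (n : ℝ) ^ 2 * Q₁ ^ 2 + Q₀ ^ 2) ≤
        (m : ℝ)⁻¹ * ∑ j ∈ Finset.Icc ⌊κ * m⌋₊ m,
          (‖
            ((1 - Complex.exp (Complex.I * ((2 * Real.pi * j / n : ℝ) : ℂ))) ^ 3 * (Q₃ : ℂ) +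
             (1 - Complex.exp (Complex.I * ((2 * Real.pi * j / n : ℝ) : ℂ))) ^ 2 * (Q₂ : ℂ) +
             (1 - Complex.exp (Complex.I * ((2 * Real.pi * j / n : ℝ) : ℂ))) * (Q₁ : ℂ) +
             (Q₀ : ℂ))‖) ^ 2 := by
  obtain ⟨C, hC, hfour⟩ := exists_weighted_sq_le_sum_sq_at_four_freqs
  refine ⟨1 / (32 * C), by positivity, 1 / 2, by norm_num, 32, fun n m hm hmn Q₀ Q₁ Q₂ Q₃ => ?_⟩
  set F : ℕ → ℝ := fun j => ‖oneSubExpFreq n j ^ 3 * (Q₃ : ℂ) + oneSubExpFreq n j ^ 2 * (Q₂ : ℂ) +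
    oneSubExpFreq n j * (Q₁ : ℂ) + (Q₀ : ℂ)‖ ^ 2
  set S := (m : ℝ) ^ 6 / (n : ℝ) ^ 6 * Q₃ ^ 2 + (m : ℝ) ^ 4 / (n : ℝ) ^ 4 * Q₂ ^ 2 +
    (m : ℝ) ^ 2 / (n : ℝ) ^ 2 * Q₁ ^ 2 + Q₀ ^ 2
  show 1 / (32 * C) * S ≤ (m : ℝ)⁻¹ * ∑ j ∈ Icc ⌊κ * m⌋₊ m, F j
  have hm0 : (0 : ℝ) < m := by exact_mod_cast (by omega : 0 < m)
  have hL : (m : ℝ) ≤ 32 * (m / 16 : ℕ) := by exact_mod_cast (by omega : m ≤ 32 * (m / 16))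
  have ha := Nat.floor_mul_add_four_mul_div_sixteen_le hκ.1.le hκ.2.le m
  have hsum := mul_le_sum_Icc_of_forall_le_sum_fin (f := F) (k := 4) (m := m)
    (fun j => by positivity) (by omega) hC.le fun t ht =>
      hfour n m (m / 16) (by omega) (by exact_mod_cast (by linarith : (2 * m : ℝ) ≤ n))
        (by omega) (fun i => ⌊κ * m⌋₊ + i * (m / 16) + t)
        (fun i => by have := Nat.mul_le_mul_right (m / 16) (show (i : ℕ) ≤ 3 by omega); omega)
        (fun i i' hii' => by
          have := Nat.mul_le_mul_right (m / 16) (show (i : ℕ) + 1 ≤ i' from hii')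
          simp only [add_mul, one_mul] at this
          omega) Q₀ Q₁ Q₂ Q₃
  rw [inv_mul_eq_div, le_div_iff₀ hm0, div_mul_eq_mul_div, div_mul_eq_mul_div,
    div_le_iff₀ (by positivity)]
  linarith [mul_le_mul_of_nonneg_right hL (by positivity : 0 ≤ S)]
end

section
/- For every κ ∈ (0, 1/8) there exist η > 0, c > 0 and an integer M such that for all integers n, m with M ≤ m and m ≤ c·n, and for all real numbers Q₀, Q₂: m^{−1} Σ_{j=⌊κm⌋}^{m} ( λ_j² Q₂ − Q₀ )² ≥ η ( m⁴ n^{−4} Q₂² + Q₀² ), where λ_j = 2πj/n. -/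
open Finset Real

lemma combine (mR cb cs A B S : ℝ) (hm0 : 0 ≤ mR) (hA0 : 0 ≤ A) (hB0 : 0 ≤ B)
    (hcb1 : mR/4 ≤ cb) (hcb2 : cb ≤ mR/2) (hcs1 : mR/8 ≤ cs) (hcs2 : cs ≤ mR/2)
    (h1 : cb * (81/512*A - B) ≤ S) (h2 : cs * (B/2 - A/256) ≤ S) :
    21/32768 * mR * (A + B) ≤ S := by
  have p1 : 0 ≤ (cb - mR/4) * A := mul_nonneg (by linarith) hA0
  have p2 : 0 ≤ (mR/2 - cs) * A := mul_nonneg (by linarith) hA0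
  have p3 : 0 ≤ (cs - mR/8) * B := mul_nonneg (by linarith) hB0
  have p4 : 0 ≤ (mR/2 - cb) * B := mul_nonneg (by linarith) hB0
  have p5 : 0 ≤ mR * B := mul_nonneg hm0 hB0
  linarith [p1, p2, p3, p4, p5, h1, h2]

set_option maxHeartbeats 800000 in
lemma key_anticoncentration (m k : ℕ) (a b : ℝ) (hm : 16 ≤ m)
    (hk : (k : ℝ) < (m : ℝ) / 8) :
    21 / 32768 * (m : ℝ) * (a ^ 2 * (m : ℝ) ^ 4 + b ^ 2) ≤
      ∑ j ∈ Finset.Icc k m, (a * (j : ℝ) ^ 2 - b) ^ 2 := by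
  set t := m / 4 with ht
  have hmR : (16 : ℝ) ≤ (m : ℝ) := by exact_mod_cast hm
  have h8k : 8 * k < m := by
    have : ((8 * k : ℕ) : ℝ) < (m : ℝ) := by push_cast; linarith
    exact_mod_cast this
  have htm : t ≤ m := Nat.div_le_self _ _
  have h4t : 4 * t ≤ m ∧ m ≤ 4 * t + 3 := by omega
  have hkt : k ≤ t := by omega
  have hktm : k ≤ m - t := by omega
  have htR : ((t : ℝ)) ≤ (m : ℝ) / 4 := by
    have : (4 * t : ℕ) ≤ m := h4t.1
    have := (Nat.cast_le (α := ℝ)).2 this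
    push_cast at this; linarith
  have htR' : (m : ℝ) / 4 - 1 ≤ (t : ℝ) := by
    have : (m : ℕ) ≤ 4 * t + 3 := h4t.2
    have := (Nat.cast_le (α := ℝ)).2 this
    push_cast at this; linarith
  -- big block
  have hsubB : Finset.Icc (m - t) m ⊆ Finset.Icc k m :=
    Finset.Icc_subset_Icc hktm le_rfl
  have hsubS : Finset.Icc k t ⊆ Finset.Icc k m :=
    Finset.Icc_subset_Icc le_rfl htm
  have hA0 : (0:ℝ) ≤ a ^ 2 * (m : ℝ) ^ 4 := by positivity
  have hB0 : (0:ℝ) ≤ b ^ 2 := sq_nonneg b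
  -- per-term bound on big block
  have hXb : ((Finset.Icc (m - t) m).card : ℝ) *
      (81 / 512 * (a ^ 2 * (m : ℝ) ^ 4) - b ^ 2) ≤
      ∑ j ∈ Finset.Icc (m - t) m, (a * (j : ℝ) ^ 2 - b) ^ 2 := by
    rw [← nsmul_eq_mul]
    refine Finset.card_nsmul_le_sum _ _ _ ?_
    intro j hj
    rw [Finset.mem_Icc] at hj
    have hjR : 3 / 4 * (m : ℝ) ≤ (j : ℝ) := by
      have : ((m - t : ℕ) : ℝ) ≤ (j : ℝ) := by exact_mod_cast hj.1
      rw [Nat.cast_sub htm] at this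
      linarith
    have hj4 : (3 / 4 * (m : ℝ)) ^ 4 ≤ (j : ℝ) ^ 4 :=
      pow_le_pow_left₀ (by positivity) hjR 4
    have hA : a ^ 2 * (3 / 4 * (m : ℝ)) ^ 4 ≤ a ^ 2 * (j : ℝ) ^ 4 :=
      mul_le_mul_of_nonneg_left hj4 (sq_nonneg a)
    nlinarith [sq_nonneg (a * (j : ℝ) ^ 2 - 2 * b)]
  -- per-term bound on small block
  have hYs : ((Finset.Icc k t).card : ℝ) *
      (b ^ 2 / 2 - a ^ 2 * (m : ℝ) ^ 4 / 256) ≤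
      ∑ j ∈ Finset.Icc k t, (a * (j : ℝ) ^ 2 - b) ^ 2 := by
    rw [← nsmul_eq_mul]
    refine Finset.card_nsmul_le_sum _ _ _ ?_
    intro j hj
    rw [Finset.mem_Icc] at hj
    have hjR : (j : ℝ) ≤ (m : ℝ) / 4 := by
      have : (j : ℝ) ≤ (t : ℝ) := by exact_mod_cast hj.2
      linarith
    have hj4 : (j : ℝ) ^ 4 ≤ ((m : ℝ) / 4) ^ 4 :=
      pow_le_pow_left₀ (by positivity) hjR 4
    have hA : a ^ 2 * (j : ℝ) ^ 4 ≤ a ^ 2 * ((m : ℝ) / 4) ^ 4 :=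
      mul_le_mul_of_nonneg_left hj4 (sq_nonneg a)
    nlinarith [sq_nonneg (a * (j : ℝ) ^ 2 - b / 2)]
  have hS1 : ∑ j ∈ Finset.Icc (m - t) m, (a * (j : ℝ) ^ 2 - b) ^ 2 ≤
      ∑ j ∈ Finset.Icc k m, (a * (j : ℝ) ^ 2 - b) ^ 2 :=
    Finset.sum_le_sum_of_subset_of_nonneg hsubB (fun i _ _ => sq_nonneg _)
  have hS2 : ∑ j ∈ Finset.Icc k t, (a * (j : ℝ) ^ 2 - b) ^ 2 ≤
      ∑ j ∈ Finset.Icc k m, (a * (j : ℝ) ^ 2 - b) ^ 2 :=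
    Finset.sum_le_sum_of_subset_of_nonneg hsubS (fun i _ _ => sq_nonneg _)
  -- card computations
  have hcb : (Finset.Icc (m - t) m).card = t + 1 := by
    rw [Nat.card_Icc]; omega
  have hcs : (Finset.Icc k t).card = t + 1 - k := by
    rw [Nat.card_Icc]
  rw [hcb] at hXb
  rw [hcs] at hYs
  have hcbR : ((t + 1 : ℕ) : ℝ) = (t : ℝ) + 1 := by push_cast; ring
  have hcsR : ((t + 1 - k : ℕ) : ℝ) = (t : ℝ) + 1 - (k : ℝ) := by
    have : k ≤ t + 1 := by omega
    push_cast [Nat.cast_sub this]; ring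
  rw [hcbR] at hXb
  rw [hcsR] at hYs
  set cb : ℝ := (t : ℝ) + 1 with hcb'
  set cs : ℝ := (t : ℝ) + 1 - (k : ℝ) with hcs'
  have hcb1 : (m : ℝ) / 4 ≤ cb := by rw [hcb']; linarith
  have hcb2 : cb ≤ (m : ℝ) / 2 := by rw [hcb']; linarith
  have hcs1 : (m : ℝ) / 8 ≤ cs := by rw [hcs']; linarith
  have hcs2 : cs ≤ (m : ℝ) / 2 := by
    rw [hcs']
    have : (0:ℝ) ≤ (k : ℝ) := Nat.cast_nonneg k
    linarith
  set A : ℝ := a ^ 2 * (m : ℝ) ^ 4 with hA'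
  set B : ℝ := b ^ 2 with hB'
  set S : ℝ := ∑ j ∈ Finset.Icc k m, (a * (j : ℝ) ^ 2 - b) ^ 2 with hS'
  have h1 : cb * (81 / 512 * A - B) ≤ S := le_trans hXb hS1
  have h2 : cs * (B / 2 - A / 256) ≤ S := le_trans hYs hS2
  exact combine (m : ℝ) cb cs A B S (by positivity) hA0 hB0 hcb1 hcb2 hcs1 hcs2 h1 h2

/-- Inequality (90) from the proof of Lemma 5.10, with `λ_j = 2πj/n`:
`m⁻¹ ∑_{j=⌊κm⌋}^m (λ_j²Q₂ − Q₀)² ≥ η (m⁴n⁻⁴Q₂² + Q₀²)`,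
where `η, c, M` do not depend on `Q₀, Q₂`. -/
theorem quadratic_anticoncentration (κ : ℝ) (hκ : κ ∈ Set.Ioo (0 : ℝ) (1/8)) :
    ∃ η > 0, ∃ c > 0, ∃ M : ℕ, ∀ n m : ℕ, M ≤ m → (m : ℝ) ≤ c * n →
      ∀ Q₀ Q₂ : ℝ,
        η * ((m : ℝ) ^ 4 / (n : ℝ) ^ 4 * Q₂ ^ 2 + Q₀ ^ 2) ≤
        (m : ℝ)⁻¹ * ∑ j ∈ Finset.Icc ⌊κ * m⌋₊ m,
          ((2 * Real.pi * j / n) ^ 2 * Q₂ - Q₀) ^ 2 := by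
  obtain ⟨hκ0, hκ8⟩ := hκ
  refine ⟨21 / 32768, by norm_num, 1, one_pos, 16, ?_⟩
  intro n m hM hmn Q₀ Q₂
  have hmR : (16 : ℝ) ≤ (m : ℝ) := by exact_mod_cast hM
  have hnR : (16 : ℝ) ≤ (n : ℝ) := by linarith [hmn]
  have hn0 : (0 : ℝ) < (n : ℝ) := by linarith
  have hm0 : (0 : ℝ) < (m : ℝ) := by linarith
  set a : ℝ := (2 * Real.pi / n) ^ 2 * Q₂ with ha'
  have hk : ((⌊κ * m⌋₊ : ℕ) : ℝ) < (m : ℝ) / 8 := by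
    have h1 : ((⌊κ * m⌋₊ : ℕ) : ℝ) ≤ κ * m := Nat.floor_le (by positivity)
    have : κ * m < (m : ℝ) / 8 := by nlinarith
    linarith
  have hsum : ∑ j ∈ Finset.Icc ⌊κ * m⌋₊ m,
      ((2 * Real.pi * j / n) ^ 2 * Q₂ - Q₀) ^ 2 =
      ∑ j ∈ Finset.Icc ⌊κ * m⌋₊ m, (a * (j : ℝ) ^ 2 - Q₀) ^ 2 := by
    refine Finset.sum_congr rfl (fun j _ => ?_)
    rw [ha']; ring
  have hkey := key_anticoncentration m ⌊κ * m⌋₊ a Q₀ hM hk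
  have hpi := Real.pi_gt_three
  have haA : (m : ℝ) ^ 4 / (n : ℝ) ^ 4 * Q₂ ^ 2 ≤ a ^ 2 * (m : ℝ) ^ 4 := by
    have hne : (n : ℝ) ≠ 0 := ne_of_gt hn0
    have heq : a ^ 2 * (m : ℝ) ^ 4 =
        16 * Real.pi ^ 4 * ((m : ℝ) ^ 4 / (n : ℝ) ^ 4 * Q₂ ^ 2) := by
      rw [ha']; field_simp; ring
    have h0 : (0 : ℝ) ≤ (m : ℝ) ^ 4 / (n : ℝ) ^ 4 * Q₂ ^ 2 := by positivity
    have hp2 : (9:ℝ) ≤ Real.pi ^ 2 := by nlinarith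
    have hp4 : (81:ℝ) ≤ Real.pi ^ 4 := by nlinarith
    have := mul_le_mul_of_nonneg_right hp4 h0
    linarith
  rw [hsum]
  have step : 21 / 32768 * ((m : ℝ) ^ 4 / (n : ℝ) ^ 4 * Q₂ ^ 2 + Q₀ ^ 2) ≤
      (m : ℝ)⁻¹ * (21 / 32768 * (m : ℝ) * (a ^ 2 * (m : ℝ) ^ 4 + Q₀ ^ 2)) := by
    rw [inv_mul_eq_div]
    rw [le_div_iff₀ hm0]
    nlinarith
  calc 21 / 32768 * ((m : ℝ) ^ 4 / (n : ℝ) ^ 4 * Q₂ ^ 2 + Q₀ ^ 2) ≤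
      (m : ℝ)⁻¹ * (21 / 32768 * (m : ℝ) * (a ^ 2 * (m : ℝ) ^ 4 + Q₀ ^ 2)) := step
    _ ≤ _ := mul_le_mul_of_nonneg_left hkey (by positivity)
end

section
/- There exists a constant C > 0 such that for all integers n ≥ 2, all integers j with 1 ≤ j ≤ n/2, and all integers p with 0 ≤ p ≤ n − 1, the quantity c_{np} = Σ_{k=p+1}^{n-1} e^{i(k−p)λ_j} / (k(k+1)) satisfies |c_{np}| ≤ C · min{ 1/max(p,1), n / (j · max(p,1)²) }, where λ_j = 2πj/n. -/
/-!
With `z = e^{iλ}` and `k = p + 1 + i`, the coefficient is `∑ᵢ bᵢ z^{i+1}` with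
`bᵢ = 1/((p+1+i)(p+2+i))`, a decreasing sequence that telescopes to at most `1/(p+1)`; this
gives the first bound. For the second, Abel summation bounds the sum by `b₀` times the largest
partial sum of `z^{i+1}`, which is at most `2/|z - 1| ≤ π/λ = n/(2j)` by Jordan's inequality
`sin t ≥ 2t/π` on `[0, π/2]`.
-/

open Finset Complex

theorem Antitone.norm_sum_range_smul_le {E : Type*} [SeminormedAddCommGroup E]
    [NormedSpace ℝ E] {f : ℕ → ℝ} {g : ℕ → E} {A : ℝ} (hf : Antitone f) (hf0 : ∀ i, 0 ≤ f i)
    (hg : ∀ m, ‖∑ i ∈ range m, g i‖ ≤ A) (n : ℕ) :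
    ‖∑ i ∈ range n, f i • g i‖ ≤ A * f 0 := by
  rw [sum_range_by_parts]
  calc _ ≤ ‖f (n - 1) • ∑ i ∈ range n, g i‖
          + ∑ i ∈ range (n - 1), ‖(f (i + 1) - f i) • ∑ k ∈ range (i + 1), g k‖ :=
        (norm_sub_le _ _).trans (add_le_add le_rfl (norm_sum_le _ _))
    _ ≤ f (n - 1) * A + ∑ i ∈ range (n - 1), (f i - f (i + 1)) * A := by
        gcongr with i
        · rw [norm_smul, Real.norm_of_nonneg (hf0 _)]
          exact mul_le_mul_of_nonneg_left (hg n) (hf0 _)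
        · have hdiff : 0 ≤ f i - f (i + 1) := sub_nonneg.2 (hf i.le_succ)
          rw [norm_smul, Real.norm_eq_abs, abs_sub_comm, abs_of_nonneg hdiff]
          exact mul_le_mul_of_nonneg_left (hg _) hdiff
    _ = A * f 0 := by rw [← sum_mul, sum_range_sub']; ring

theorem norm_geom_sum_le_two_div {K : Type*} [NormedDivisionRing K] {z : K} (hz : ‖z‖ ≤ 1)
    (hz1 : z ≠ 1) (n : ℕ) : ‖∑ i ∈ range n, z ^ i‖ ≤ 2 / ‖z - 1‖ := by
  rw [geom_sum_eq hz1, norm_div]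
  gcongr
  calc ‖z ^ n - 1‖ ≤ ‖z‖ ^ n + ‖(1 : K)‖ := by rw [← norm_pow]; exact norm_sub_le _ _
    _ ≤ 2 := by rw [norm_one]; linarith [pow_le_one₀ (norm_nonneg z) hz (n := n)]

theorem two_div_pi_mul_le_norm_exp_I_mul_sub_one {x : ℝ} (hx0 : 0 ≤ x) (hx : x ≤ Real.pi) :
    2 / Real.pi * x ≤ ‖exp (I * x) - 1‖ := by
  have hsin := Real.mul_le_sin (x := x / 2) (by linarith) (by linarith)
  rw [norm_exp_I_mul_ofReal_sub_one, Real.norm_eq_abs]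
  exact le_abs.2 (Or.inl (by linarith))

theorem antitone_one_div_mul_add_one {a : ℝ} (ha : 0 < a) :
    Antitone fun i : ℕ ↦ 1 / ((a + i) * (a + i + 1)) :=
  antitone_nat_of_succ_le fun i ↦ by push_cast; gcongr <;> linarith

theorem sum_range_one_div_mul_add_one_le {a : ℝ} (ha : 0 < a) (n : ℕ) :
    ∑ i ∈ range n, 1 / ((a + i) * (a + i + 1)) ≤ 1 / a := by
  have htel : ∀ i : ℕ, 1 / ((a + i) * (a + i + 1)) = 1 / (a + i) - 1 / (a + (i + 1 : ℕ)) := by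
    intro i
    push_cast
    field_simp
    ring
  simp_rw [htel, sum_range_sub']
  simp only [Nat.cast_zero, add_zero, sub_le_self_iff]
  positivity

theorem sum_Icc_exp_div_eq_sum_range (x : ℝ) (p N : ℕ) :
    ∑ k ∈ Icc (p + 1) N, exp (I * ((k : ℂ) - p) * x) / ((k : ℂ) * ((k : ℂ) + 1)) =
      ∑ i ∈ range (N - p), (1 / (((p : ℝ) + 1 + i) * ((p : ℝ) + 1 + i + 1))) •
        exp (I * x) ^ (i + 1) := by
  rw [← Ico_add_one_right_eq_Icc, sum_Ico_eq_sum_range, Nat.add_sub_add_right]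
  refine sum_congr rfl fun i _ ↦ ?_
  rw [real_smul, ← exp_nat_mul]
  push_cast
  ring_nf

theorem norm_sum_exp_I_mul_pow_succ_le {x : ℝ} (hx0 : 0 < x) (hx : x ≤ Real.pi) (m : ℕ) :
    ‖∑ i ∈ range m, exp (I * x) ^ (i + 1)‖ ≤ Real.pi / x := by
  have hchord := two_div_pi_mul_le_norm_exp_I_mul_sub_one hx0.le hx
  have hz1 : exp (I * x) ≠ 1 := fun h ↦ by
    rw [h, sub_self, norm_zero] at hchord
    exact hchord.not_gt (by positivity)
  simp_rw [pow_succ', ← mul_sum, norm_mul, norm_exp_I_mul_ofReal, one_mul]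
  calc _ ≤ 2 / ‖exp (I * x) - 1‖ :=
        norm_geom_sum_le_two_div (norm_exp_I_mul_ofReal x).le hz1 m
    _ ≤ 2 / (2 / Real.pi * x) := by gcongr
    _ = Real.pi / x := by field_simp

theorem norm_sum_smul_exp_I_mul_pow_succ_le_one_div {a : ℝ} (ha : 0 < a) (x : ℝ) (n : ℕ) :
    ‖∑ i ∈ range n, (1 / ((a + i) * (a + i + 1))) • exp (I * x) ^ (i + 1)‖ ≤ 1 / a := by
  refine (norm_sum_le _ _).trans ((sum_le_sum fun i _ ↦ ?_).trans
    (sum_range_one_div_mul_add_one_le ha n))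
  rw [norm_smul, norm_pow, norm_exp_I_mul_ofReal, one_pow, mul_one,
    Real.norm_of_nonneg (by positivity)]

theorem norm_sum_smul_exp_I_mul_pow_succ_le_pi_div {a : ℝ} (ha : 0 < a) (n : ℕ) {x : ℝ}
    (hx0 : 0 < x) (hx : x ≤ Real.pi) :
    ‖∑ i ∈ range n, (1 / ((a + i) * (a + i + 1))) • exp (I * x) ^ (i + 1)‖ ≤
      Real.pi / x * (1 / (a * (a + 1))) := by
  simpa using (antitone_one_div_mul_add_one ha).norm_sum_range_smul_le
    (fun _ ↦ by positivity) (norm_sum_exp_I_mul_pow_succ_le hx0 hx) n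

/-- Bound (80) from the proof of Lemma 5.9: with `λ_j = 2πj/n`, the coefficients
`c_{np} = ∑_{k=p+1}^{n-1} e^{i(k−p)λ_j}/(k(k+1))` satisfy
`|c_{np}| ≤ C min{ 1/max(p,1), n/(j max(p,1)²) }` uniformly. -/
theorem second_difference_coefficient_bound :
    ∃ C > 0, ∀ n : ℕ, 2 ≤ n → ∀ j : ℕ, 1 ≤ j → (j : ℝ) ≤ (n : ℝ) / 2 →
      ∀ p : ℕ, p ≤ n - 1 →
        ‖(∑ k ∈ Finset.Icc (p + 1) (n - 1),
            Complex.exp (Complex.I * ((k : ℂ) - (p : ℂ)) * ((2 * Real.pi * j / n : ℝ) : ℂ)) /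
              ((k : ℂ) * ((k : ℂ) + 1)))‖ ≤
          C * min (1 / max (p : ℝ) 1) ((n : ℝ) / (j * (max (p : ℝ) 1) ^ 2)) := by
  refine ⟨1, one_pos, fun n _ j hj hjn p _ ↦ ?_⟩
  have hn0 : (0 : ℝ) < n := by positivity
  have hj0 : (0 : ℝ) < j := by exact_mod_cast hj
  have hp0 : (0 : ℝ) < p + 1 := by positivity
  have hx : 2 * Real.pi * j / n ≤ Real.pi := by
    rw [div_le_iff₀ hn0]; nlinarith [Real.pi_pos]
  have hq : max (p : ℝ) 1 ≤ p + 1 := max_le (by linarith) (by simp)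
  have hq2 : max (p : ℝ) 1 ^ 2 ≤ (p + 1) * (p + 1 + 1) := by nlinarith [le_max_right (p : ℝ) 1]
  rw [sum_Icc_exp_div_eq_sum_range, one_mul]
  refine le_min ?_ ?_
  · calc _ ≤ 1 / ((p : ℝ) + 1) := norm_sum_smul_exp_I_mul_pow_succ_le_one_div hp0 _ _
      _ ≤ 1 / max (p : ℝ) 1 := by gcongr
  · calc _ ≤ Real.pi / (2 * Real.pi * j / n) * (1 / ((p + 1) * (p + 1 + 1))) :=
          norm_sum_smul_exp_I_mul_pow_succ_le_pi_div hp0 _ (by positivity) hx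
      _ = n / (2 * j * ((p + 1) * (p + 1 + 1))) := by field_simp
      _ ≤ n / (j * max (p : ℝ) 1 ^ 2) := by
          gcongr
          nlinarith [mul_le_mul_of_nonneg_left hq2 hj0.le]
end
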